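/- arXiv:1510.03943 — 2 statements merged into one kernel-verified Lean document; each statement's English description precedes it below -/
import Mathlib

section
/- Let ω ∈ Ω, let x ∈ ℤ² lie in an infinite 0-cluster of ω and let y ∈ ℤ² lie in an infinite 1-cluster of ω, and let ℓ be a path of edges of G connecting x and y. Then ℓ crosses infinite contours of φ(ω) an odd total number of times. In particular, if ω has both an infinite 0-cluster and an infinite 1-cluster, then φ(ω) has an infinite contour. -/
/-!
Every edge of `G` is crossed by exactly one edge of `ℒ₁ ∪ ℒ₂` through a black face, and under the
constraint that edge is present iff the states at the two endpoints differ. So the number of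
edges of `ℓ` crossing a contour has the parity of the number of state changes along `ℓ`, which
is odd since `ω x ≠ ω y`. A union `S` of contours is crossed an even number of times by the
sides of every unit square, i.e. it is a closed `ℤ/2`-valued 1-cochain; when `S` is finite it is
the coboundary of a finitely supported `σ : ℤ² → ℤ/2`. Such a `σ` is constant on clusters, hence
zero on infinite ones, so `ℓ` crosses the finitely many finite contours it meets an even number
of times, and the infinite contours an odd number of times.
-/

open scoped Classical ENNReal
open MeasureTheory

noncomputable section

namespace CP

/-! ### Site configurations and clusters on the square lattice `G = ℤ²`.
States `0` / `1` are encoded as `false` / `true`. -/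

abbrev Config := ℤ × ℤ → Bool

/-- Adjacency in the square lattice `G` on `ℤ²` (ℓ¹-distance one). -/
def ZAdj (u v : ℤ × ℤ) : Prop := |u.1 - v.1| + |u.2 - v.2| = 1

/-- The hard local constraint: around each black face (lower-left corner `(m,n)` with
`m + n` even), the corners read clockwise from the lower-left corner form one of the
words `0000, 1111, 0011, 1100, 0110, 1001`; equivalently, the two vertical sides are
each monochromatic, or the two horizontal sides are each monochromatic. -/
def Constrained (ω : Config) : Prop :=
  ∀ m n : ℤ, Even (m + n) →
    ((ω (m, n) = ω (m, n + 1) ∧ ω (m + 1, n) = ω (m + 1, n + 1)) ∨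
     (ω (m, n) = ω (m + 1, n) ∧ ω (m, n + 1) = ω (m + 1, n + 1)))

/-- `u` and `v` are joined by a path of vertices all having the same state. -/
def SameCluster (ω : Config) (u v : ℤ × ℤ) : Prop :=
  Relation.ReflTransGen (fun a b => ZAdj a b ∧ ω a = ω b) u v

/-- The cluster of the vertex `v`. -/
def cluster (ω : Config) (v : ℤ × ℤ) : Set (ℤ × ℤ) := {w | SameCluster ω v w}

def IsCluster (ω : Config) (D : Set (ℤ × ℤ)) : Prop := ∃ v, D = cluster ω v

def infiniteClusters (ω : Config) : Set (Set (ℤ × ℤ)) := {D | IsCluster ω D ∧ D.Infinite}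

/-! ### Contours.
An edge of `ℒ₁ ∪ ℒ₂` is encoded by the black face it crosses (its lower-left corner)
together with its direction (`true` = horizontal).  Endpoints are recorded in doubled
coordinates, so that the vertex `(x, y)` of the plane corresponds to `(2x, 2y)`. -/

abbrev BEdge := (ℤ × ℤ) × Bool

def IsBlackFace (f : ℤ × ℤ) : Prop := Even (f.1 + f.2)

/-- Edges of `ℒ₁` (whose vertices are the points `(m - 1/2, n + 1/2)`, `m, n` even). -/
def IsPrimalEdge (e : BEdge) : Prop :=
  (e.2 = true ∧ Even e.1.1 ∧ Even e.1.2) ∨ (e.2 = false ∧ Odd e.1.1 ∧ Odd e.1.2)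

/-- Edges of `ℒ₂` (whose vertices are the points `(m - 1/2, n + 1/2)`, `m, n` odd). -/
def IsDualEdge (e : BEdge) : Prop :=
  (e.2 = true ∧ Odd e.1.1 ∧ Odd e.1.2) ∨ (e.2 = false ∧ Even e.1.1 ∧ Even e.1.2)

/-- The two endpoints of a contour edge, in doubled coordinates. -/
def edgeEnds (e : BEdge) : (ℤ × ℤ) × (ℤ × ℤ) :=
  if e.2 then ((2 * e.1.1 - 1, 2 * e.1.2 + 1), (2 * e.1.1 + 3, 2 * e.1.2 + 1))
  else ((2 * e.1.1 + 1, 2 * e.1.2 - 1), (2 * e.1.1 + 1, 2 * e.1.2 + 3))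

def shareEnd (e₁ e₂ : BEdge) : Prop :=
  (edgeEnds e₁).1 = (edgeEnds e₂).1 ∨ (edgeEnds e₁).1 = (edgeEnds e₂).2 ∨
  (edgeEnds e₁).2 = (edgeEnds e₂).1 ∨ (edgeEnds e₁).2 = (edgeEnds e₂).2

/-- The contour configuration `φ(ω)`: a horizontal (resp. vertical) edge crossing the
black face with lower-left corner `(m, n)` is present iff the two lower corners differ
from the two upper ones (resp. the two left corners differ from the two right ones). -/
def contourCfg (ω : Config) (e : BEdge) : Bool :=
  if IsBlackFace e.1 then
    (if e.2 then ω (e.1.1, e.1.2) != ω (e.1.1, e.1.2 + 1)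
     else ω (e.1.1, e.1.2) != ω (e.1.1 + 1, e.1.2))
  else false

def SameContourB (φ : BEdge → Bool) (e e' : BEdge) : Prop :=
  Relation.ReflTransGen (fun a b => φ a = true ∧ φ b = true ∧ shareEnd a b) e e'

def contourB (φ : BEdge → Bool) (e : BEdge) : Set BEdge := {e' | SameContourB φ e e'}

/-- `C` is a contour (connected component of present edges) of the edge configuration `φ`. -/
def IsContourB (φ : BEdge → Bool) (C : Set BEdge) : Prop := ∃ e, φ e = true ∧ C = contourB φ e

def IsContour (ω : Config) (C : Set BEdge) : Prop := IsContourB (contourCfg ω) C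

def IsPrimalContour (ω : Config) (C : Set BEdge) : Prop := IsContour ω C ∧ ∀ e ∈ C, IsPrimalEdge e

def IsDualContour (ω : Config) (C : Set BEdge) : Prop := IsContour ω C ∧ ∀ e ∈ C, IsDualEdge e

/-- The vertex `v` of `G` is at Euclidean distance `1/2` from the contour edge `e`
(equivalently, `v` is a corner of the black face crossed by `e`). -/
def EdgeIncVtx (e : BEdge) (v : ℤ × ℤ) : Prop :=
  (v.1 = e.1.1 ∨ v.1 = e.1.1 + 1) ∧ (v.2 = e.1.2 ∨ v.2 = e.1.2 + 1)

/-- The contour `C` is incident to the cluster `D`. -/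
def ContourIncCluster (C : Set BEdge) (D : Set (ℤ × ℤ)) : Prop := ∃ e ∈ C, ∃ v ∈ D, EdgeIncVtx e v

/-- The edge of `G` joining `u` and `v` is crossed by the contour edge `e`
(doubled midpoints are compared). -/
def crossesG (e : BEdge) (u v : ℤ × ℤ) : Prop :=
  ZAdj u v ∧
    (if e.2 then
      (u.1 + v.1, u.2 + v.2) = (2 * e.1.1, 2 * e.1.2 + 1) ∨
      (u.1 + v.1, u.2 + v.2) = (2 * e.1.1 + 2, 2 * e.1.2 + 1)
     else
      (u.1 + v.1, u.2 + v.2) = (2 * e.1.1 + 1, 2 * e.1.2) ∨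
      (u.1 + v.1, u.2 + v.2) = (2 * e.1.1 + 1, 2 * e.1.2 + 2))

/-- The connected component of `v` in the graph obtained from `G` by deleting every
edge crossed by some contour edge belonging to `R`. -/
def GminusComp (R : Set BEdge) (v : ℤ × ℤ) : Set (ℤ × ℤ) :=
  {w | Relation.ReflTransGen (fun a b => ZAdj a b ∧ ¬∃ e ∈ R, crossesG e a b) v w}

/-! ### Ends of contours -/

/-- The connected component of the edge `e` within the edge set `S`. -/
def compIn (S : Set BEdge) (e : BEdge) : Set BEdge :=
  {e' | Relation.ReflTransGen (fun a b => a ∈ S ∧ b ∈ S ∧ shareEnd a b) e e'}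

/-- The contour `C` has at most two ends: removing any finite set of edges leaves at
most two infinite components. -/
def AtMostTwoEnds (C : Set BEdge) : Prop :=
  ∀ F : Set BEdge, F.Finite →
    ∀ e₁ e₂ e₃, e₁ ∈ C \ F → e₂ ∈ C \ F → e₃ ∈ C \ F →
      (compIn (C \ F) e₁).Infinite → (compIn (C \ F) e₂).Infinite →
      (compIn (C \ F) e₃).Infinite →
      compIn (C \ F) e₁ = compIn (C \ F) e₂ ∨ compIn (C \ F) e₁ = compIn (C \ F) e₃ ∨
        compIn (C \ F) e₂ = compIn (C \ F) e₃

/-! ### Planar embedding.  Note that `ℝ × ℝ` carries the ℓ∞ (sup) product metric. -/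

abbrev Plane := ℝ × ℝ

/-- The point of the plane with doubled coordinates `p`. -/
def ptOfDoubled (p : ℤ × ℤ) : Plane := ((p.1 : ℝ) / 2, (p.2 : ℝ) / 2)

/-- The planar position of a vertex of `G`. -/
def vtxPt (v : ℤ × ℤ) : Plane := ((v.1 : ℝ), (v.2 : ℝ))

/-- The closed planar segment realizing a contour edge. -/
def segOf (e : BEdge) : Set Plane :=
  segment ℝ (ptOfDoubled (edgeEnds e).1) (ptOfDoubled (edgeEnds e).2)

/-- The closed subset of `ℝ²` realizing a set of contour edges. -/
def contourSet (C : Set BEdge) : Set Plane := ⋃ e ∈ C, segOf e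

/-- The unbounded connected components of the complement of `S ⊆ ℝ²`. -/
def unbComps (S : Set Plane) : Set (Set Plane) :=
  {T | (∃ x ∈ Sᶜ, T = connectedComponentIn Sᶜ x) ∧ ¬Bornology.IsBounded T}

/-- The family `𝒞₂` of infinite contours whose planar complement has exactly two
unbounded components. -/
def C2set (ω : Config) : Set (Set BEdge) :=
  {C | IsContour ω C ∧ C.Infinite ∧ (unbComps (contourSet C)).ncard = 2}

/-! ### Interfaces, drawn on the dual `[Aℤ²]*` of the augmented square grid. -/

/-- `R(e)`: points at ℓ∞-distance at most `1/4` from the segment `e`. -/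
def Rnbhd (e : BEdge) : Set Plane := {x | Metric.infDist x (segOf e) ≤ 1 / 4}

/-- Edges of `[Aℤ²]*`, encoded by (index of) their lower-left endpoint and a direction
(`true` = horizontal); the vertex with index `(k, l)` is the point `(k/2 + 1/4, l/2 + 1/4)`. -/
abbrev QEdge := (ℤ × ℤ) × Bool

def qVtx (p : ℤ × ℤ) : Plane := ((p.1 : ℝ) / 2 + 1 / 4, (p.2 : ℝ) / 2 + 1 / 4)

def qEnds (q : QEdge) : (ℤ × ℤ) × (ℤ × ℤ) :=
  if q.2 then (q.1, (q.1.1 + 1, q.1.2)) else (q.1, (q.1.1, q.1.2 + 1))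

def qSeg (q : QEdge) : Set Plane := segment ℝ (qVtx (qEnds q).1) (qVtx (qEnds q).2)

/-- The interface of a contour `C`: the edges of `[Aℤ²]*` constituting the topological
boundary of `⋃ e ∈ C, R(e)`. -/
def ifaceEdges (C : Set BEdge) : Set QEdge := {q | qSeg q ⊆ frontier (⋃ e ∈ C, Rnbhd e)}

/-- The interface of the contour configuration `φ(ω)`: the union of the interfaces of
all contours. -/
def interfaceOf (ω : Config) : Set QEdge := ⋃ C ∈ {C | IsContour ω C}, ifaceEdges C

def qShare (q₁ q₂ : QEdge) : Prop :=
  (qEnds q₁).1 = (qEnds q₂).1 ∨ (qEnds q₁).1 = (qEnds q₂).2 ∨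
  (qEnds q₁).2 = (qEnds q₂).1 ∨ (qEnds q₁).2 = (qEnds q₂).2

def qCompIn (S : Set QEdge) (q : QEdge) : Set QEdge :=
  {q' | Relation.ReflTransGen (fun a b => a ∈ S ∧ b ∈ S ∧ qShare a b) q q'}

/-- `I` is a connected component of the interface of `φ(ω)`. -/
def IsInterfaceComp (ω : Config) (I : Set QEdge) : Prop :=
  ∃ q ∈ interfaceOf ω, I = qCompIn (interfaceOf ω) q

/-- The subset of `ℝ²` realizing a set of `[Aℤ²]*`-edges. -/
def qRealize (I : Set QEdge) : Set Plane := ⋃ q ∈ I, qSeg q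

/-- `F_I`: the vertices of `G` at ℓ∞-distance exactly `1/4` from `I`. -/
def interfaceNbrs (I : Set QEdge) : Set (ℤ × ℤ) :=
  {v | Metric.infDist (vtxPt v) (qRealize I) = 1 / 4}

/-- The edge set `I` is a doubly-infinite self-avoiding path in `[Aℤ²]*`. -/
def IsBiInfPathQ (I : Set QEdge) : Prop :=
  ∃ γ : ℤ → ℤ × ℤ, Function.Injective γ ∧
    (∀ i : ℤ, ∃ q ∈ I, qEnds q = (γ i, γ (i + 1)) ∨ qEnds q = (γ (i + 1), γ i)) ∧
    (∀ q ∈ I, ∃ i : ℤ, qEnds q = (γ i, γ (i + 1)) ∨ qEnds q = (γ (i + 1), γ i))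

/-- The edge set `I` is a (finite) self-avoiding cycle in `[Aℤ²]*`. -/
def IsCycleQ (I : Set QEdge) : Prop :=
  ∃ n : ℕ, 0 < n ∧ ∃ γ : ℤ → ℤ × ℤ,
    (∀ i : ℤ, γ (i + n) = γ i) ∧
    (∀ i j : ℤ, 0 ≤ i → i < j → j < n → γ i ≠ γ j) ∧
    (∀ i : ℤ, ∃ q ∈ I, qEnds q = (γ i, γ (i + 1)) ∨ qEnds q = (γ (i + 1), γ i)) ∧
    (∀ q ∈ I, ∃ i : ℤ, qEnds q = (γ i, γ (i + 1)) ∨ qEnds q = (γ (i + 1), γ i))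

/-- `F` is the vertex set of a doubly-infinite self-avoiding path in `G`. -/
def IsBiInfPathVtxSet (F : Set (ℤ × ℤ)) : Prop :=
  ∃ p : ℤ → ℤ × ℤ, Function.Injective p ∧ (∀ i : ℤ, ZAdj (p i) (p (i + 1))) ∧ Set.range p = F

/-- `F` is the vertex set of a self-avoiding cycle in `G`. -/
def IsCycleVtxSet (F : Set (ℤ × ℤ)) : Prop :=
  ∃ n : ℕ, 0 < n ∧ ∃ p : ℤ → ℤ × ℤ,
    (∀ i : ℤ, p (i + n) = p i) ∧
    (∀ i j : ℤ, 0 ≤ i → i < j → j < n → p i ≠ p j) ∧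
    (∀ i : ℤ, ZAdj (p i) (p (i + 1))) ∧ Set.range p = F

/-! ### Measures, translations and symmetries -/

/-- Translation of configurations by `t ∈ ℤ²`. -/
def shift (t : ℤ × ℤ) (ω : Config) : Config := fun v => ω (v.1 - t.1, v.2 - t.2)

/-- The involution `θ` exchanging the states `0` and `1`. -/
def flipConf (ω : Config) : Config := fun v => !(ω v)

/-- The primal contour configuration (the marginal on `E(ℒ₁)`). -/
def primalOf (ω : Config) : BEdge → Bool := fun e => if IsPrimalEdge e then contourCfg ω e else false

/-- The dual contour configuration (the marginal on `E(ℒ₂)`). -/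
def dualOf (ω : Config) : BEdge → Bool := fun e => if IsDualEdge e then contourCfg ω e else false

/-- The four boundary edges of the face `S` of `ℒ₁` indexed by the parameters
`(p, q)` (`p`, `q` odd) of the `ℒ₂`-vertex at its centre. -/
def faceEdgesL1 (p q : ℤ) : Set BEdge :=
  {((p - 1, q + 1), true), ((p - 1, q - 1), true), ((p - 2, q), false), ((p, q), false)}

/-- Switch the states of the four boundary edges of a face of `ℒ₁`. -/
def switchFace (p q : ℤ) (φ : BEdge → Bool) : BEdge → Bool :=
  fun e => if e ∈ faceEdgesL1 p q then !(φ e) else φ e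

/-- (A1): invariance under the subgroup of `ℤ²` generated by `(1,1)` and `(1,-1)`,
i.e. under every translation `t` with `t.1 + t.2` even. -/
def SatisfiesA1 (μ : Measure Config) : Prop :=
  ∀ t : ℤ × ℤ, Even (t.1 + t.2) → Measure.map (shift t) μ = μ

/-- (A2): `2ℤ × 2ℤ`-ergodicity. -/
def SatisfiesA2 (μ : Measure Config) : Prop :=
  ∀ A : Set Config, MeasurableSet A →
    (∀ t : ℤ × ℤ, shift (2 * t.1, 2 * t.2) ⁻¹' A = A) → μ A = 0 ∨ μ A = 1

/-- (A3): symmetry under exchanging `0` and `1`. -/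
def SatisfiesA3 (μ : Measure Config) : Prop := Measure.map flipConf μ = μ

/-- (Ak1): invariance under `2kℤ × 2kℤ`-translations. -/
def SatisfiesAk1 (k : ℕ) (μ : Measure Config) : Prop :=
  ∀ t : ℤ × ℤ, Measure.map (shift (2 * (k : ℤ) * t.1, 2 * (k : ℤ) * t.2)) μ = μ

/-- (Ak2): `2kℤ × 2kℤ`-ergodicity. -/
def SatisfiesAk2 (k : ℕ) (μ : Measure Config) : Prop :=
  ∀ A : Set Config, MeasurableSet A →
    (∀ t : ℤ × ℤ, shift (2 * (k : ℤ) * t.1, 2 * (k : ℤ) * t.2) ⁻¹' A = A) →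
      μ A = 0 ∨ μ A = 1

/-- (A4): finite energy of the primal contour marginal `ν₁ = primalOf_* μ`:
switching the four sides of a face of `ℒ₁` preserves positivity of probabilities. -/
def SatisfiesA4 (μ : Measure Config) : Prop :=
  ∀ p q : ℤ, Odd p → Odd q → ∀ E : Set (BEdge → Bool), MeasurableSet E →
    0 < Measure.map primalOf μ E → 0 < Measure.map primalOf μ (switchFace p q '' E)

/-! ### The induced site configuration on `V(ℒ₁)` (for assumption (A5)).
Vertices of `ℒ₁` are indexed by `(a, b) ∈ ℤ²` (the vertex `(2a - 1/2, 2b + 1/2)`);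
the base vertex `v₀` has index `(0, 0)`. -/

/-- Parity (as a `Bool`) of the number of `i` between `0` and `j` with `f i = true`. -/
def rangeParity (f : ℤ → Bool) (j : ℤ) : Bool :=
  if 0 ≤ j then decide (Odd (((Finset.Ico (0 : ℤ) j).filter fun i => f i = true).card))
  else decide (Odd (((Finset.Ico j (0 : ℤ)).filter fun i => f i = true).card))

/-- The site configuration on `V(ℒ₁)` induced by a dual contour configuration `ψ`
and the state `b₀` at the base vertex: states flip exactly across present dual edges. -/
def inducedSite (b₀ : Bool) (ψ : BEdge → Bool) : Config :=
  fun v => Bool.xor b₀ (Bool.xor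
    (rangeParity (fun i => ψ ((2 * i, 0), false)) v.1)
    (rangeParity (fun l => ψ ((2 * v.1 - 1, 2 * l + 1), true)) v.2))

/-- The law `λ₁` on `{0,1}^{V(ℒ₁)}` induced by the dual contour marginal of `μ`
together with a fair coin for the state of the base vertex. -/
def lam1 (μ : Measure Config) : Measure Config :=
  (1 / 2 : ℝ≥0∞) • Measure.map (fun ω => inducedSite true (dualOf ω)) μ +
    (1 / 2 : ℝ≥0∞) • Measure.map (fun ω => inducedSite false (dualOf ω)) μ

/-- (A5): `λ₁` is `2ℤ × 2ℤ`-ergodic (translations of the plane by `2ℤ × 2ℤ` act on the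
index set of `V(ℒ₁)` as all of `ℤ × ℤ`). -/
def SatisfiesA5 (μ : Measure Config) : Prop :=
  ∀ A : Set Config, MeasurableSet A → (∀ t : ℤ × ℤ, shift t ⁻¹' A = A) →
    lam1 μ A = 0 ∨ lam1 μ A = 1

/-! ### `ℒ₁`-edges indexed by `ℒ₁`-vertex coordinates; boxes of `ℒ₂`-faces. -/

/-- The horizontal edge of `ℒ₁` joining the `ℒ₁`-vertices indexed `(a, b)` and `(a+1, b)`. -/
def hEdge (a b : ℤ) : BEdge := ((2 * a, 2 * b), true)

/-- The vertical edge of `ℒ₁` joining the `ℒ₁`-vertices indexed `(a, b)` and `(a, b+1)`. -/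
def vEdge (a b : ℤ) : BEdge := ((2 * a - 1, 2 * b + 1), false)

/-- Membership in `Φ₁`: a bond configuration of `ℒ₁` in which every vertex of `ℒ₁`
has an even number of incident present edges. -/
def MemPhi1 (φ : BEdge → Bool) : Prop :=
  (∀ e, φ e = true → IsPrimalEdge e) ∧
    ∀ a b : ℤ,
      Even ((if φ (hEdge (a - 1) b) then 1 else 0) + (if φ (hEdge a b) then 1 else 0) +
        (if φ (vEdge a (b - 1)) then 1 else 0) + (if φ (vEdge a b) then 1 else 0) : ℕ)

/-- The edges of `ℒ₁` crossing the boundary of the `M × N` box of faces of `ℒ₂`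
whose lower-left face contains the `ℒ₁`-vertex indexed `(a₀, b₀)`. -/
def crossEdges (a₀ b₀ : ℤ) (M N : ℕ) : Finset BEdge :=
  ((Finset.Ico b₀ (b₀ + (N : ℤ))).image fun b => hEdge (a₀ - 1) b) ∪
  ((Finset.Ico b₀ (b₀ + (N : ℤ))).image fun b => hEdge (a₀ + (M : ℤ) - 1) b) ∪
  ((Finset.Ico a₀ (a₀ + (M : ℤ))).image fun a => vEdge a (b₀ - 1)) ∪
  ((Finset.Ico a₀ (a₀ + (M : ℤ))).image fun a => vEdge a (b₀ + (N : ℤ) - 1))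

/-- The `ℒ₁`-vertex indexed `(a, b)` lies strictly inside the box. -/
def insideBox (a₀ b₀ : ℤ) (M N : ℕ) (a b : ℤ) : Prop :=
  a₀ ≤ a ∧ a < a₀ + (M : ℤ) ∧ b₀ ≤ b ∧ b < b₀ + (N : ℤ)

/-- The edges of `ℒ₁` strictly enclosed by the boundary of the box (both endpoints
strictly inside): the subgraph `B_{M-1,N-1}`. -/
def interiorEdges (a₀ b₀ : ℤ) (M N : ℕ) : Set BEdge :=
  {e | (∃ a b : ℤ, e = hEdge a b ∧ insideBox a₀ b₀ M N a b ∧ insideBox a₀ b₀ M N (a + 1) b) ∨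
       (∃ a b : ℤ, e = vEdge a b ∧ insideBox a₀ b₀ M N a b ∧ insideBox a₀ b₀ M N a (b + 1))}

/-! ### Contours of an unconstrained site configuration on `V(ℒ₂)`.
Vertices of `ℒ₂` are indexed by `(c, d) ∈ ℤ²` (the vertex `(2c + 1/2, 2d + 3/2)`);
adjacency of `ℒ₂`-vertices is `ZAdj` on indices. -/

/-- The contour configuration `ψ₁(ρ)` on `ℒ₁` of a site configuration `ρ` on `V(ℒ₂)`:
an edge of `ℒ₁` is present iff the two `ℒ₂`-vertices at distance `1` from it have
different states. -/
def psi1 (ρ : Config) (e : BEdge) : Bool :=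
  if e.2 then
    if Even e.1.1 ∧ Even e.1.2 then
      ρ (e.1.1 / 2, e.1.2 / 2) != ρ (e.1.1 / 2, e.1.2 / 2 - 1)
    else false
  else
    if Odd e.1.1 ∧ Odd e.1.2 then
      ρ ((e.1.1 + 1) / 2 - 1, (e.1.2 - 1) / 2) != ρ ((e.1.1 + 1) / 2, (e.1.2 - 1) / 2)
    else false

/-- The (indices of the) two `ℒ₂`-vertices at Euclidean distance `1` from an `ℒ₁`-edge. -/
def sepVerts (e : BEdge) : Set (ℤ × ℤ) :=
  if e.2 then {(e.1.1 / 2, e.1.2 / 2), (e.1.1 / 2, e.1.2 / 2 - 1)}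
  else {((e.1.1 + 1) / 2 - 1, (e.1.2 - 1) / 2), ((e.1.1 + 1) / 2, (e.1.2 - 1) / 2)}

/-- A contour `C ⊆ E(ℒ₁)` is incident to a set `D` of `ℒ₂`-vertices (Euclidean
distance `1`). -/
def ContourIncL2Cluster (C : Set BEdge) (D : Set (ℤ × ℤ)) : Prop :=
  ∃ e ∈ C, ∃ v ∈ sepVerts e, v ∈ D

end CP

theorem Function.Periodic.eq_of_period_one {α : Type*} {f : ℤ → α}
    (hf : Function.Periodic f 1) (m k : ℤ) : f m = f k := by
  simpa using (hf.int_mul_eq m).trans (hf.int_mul_eq k).symm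

theorem Fin.sum_succ_sub_castSucc {A : Type*} [AddCommGroup A] {n : ℕ} (g : Fin (n + 1) → A) :
    ∑ i : Fin n, (g i.succ - g i.castSucc) = g (Fin.last n) - g 0 := by
  induction n with
  | zero => simp
  | succ n ih =>
    rw [Fin.sum_univ_castSucc]
    simp only [← Fin.castSucc_succ, ih (fun i => g i.castSucc), Fin.succ_last]
    simp

theorem natCast_card_filter_ne_eq_sub {X : Type*} {n : ℕ} (f : X → ZMod 2)
    (p : Fin (n + 1) → X) :
    ((Finset.univ.filter fun i : Fin n => f (p i.castSucc) ≠ f (p i.succ)).card : ZMod 2) =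
      f (p (Fin.last n)) - f (p 0) := by
  have hflip : ∀ a b : ZMod 2, (if a ≠ b then 1 else 0) = b - a := by decide
  rw [Finset.natCast_card_filter, ← Fin.sum_succ_sub_castSucc (fun i => f (p i))]
  simp only [hflip]

theorem Finset.card_filter_eq_add_of_iff_or {ι : Type*} [DecidableEq ι] {s : Finset ι}
    {P Q R : ι → Prop} [DecidablePred P] [DecidablePred Q] [DecidablePred R]
    (h : ∀ i ∈ s, P i ↔ Q i ∨ R i) (hQR : ∀ i ∈ s, ¬ (Q i ∧ R i)) :
    (s.filter P).card = (s.filter Q).card + (s.filter R).card := by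
  rw [← card_union_of_disjoint (disjoint_filter.2 fun i hi hq hr => hQR i hi ⟨hq, hr⟩),
    ← filter_or]
  exact congrArg card (filter_congr h)

section Potential

variable {A : Type*} [AddCommGroup A]

/-- A 1-cochain on `ℤ²` is given by its values `V (a, m)` on the vertical edges
`(a, m) — (a, m + 1)` and `H (a, m)` on the horizontal edges `(a, m) — (a + 1, m)`. -/
theorem exists_potential_of_eq_zero_above {V H : ℤ × ℤ → A}
    (hclosed : ∀ a m, H (a, m) + V (a + 1, m) = V (a, m) + H (a, m + 1)) {B : ℤ}
    (hV : ∀ a m, B < m → V (a, m) = 0) (hH : ∀ a m, B < m → H (a, m) = 0) :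
    ∃ σ : ℤ × ℤ → A, (∀ a m, B < m → σ (a, m) = 0) ∧
      (∀ a m, σ (a, m + 1) - σ (a, m) = V (a, m)) ∧
      ∀ a m, σ (a + 1, m) - σ (a, m) = H (a, m) := by
  set σ : ℤ × ℤ → A := fun v => -∑ k ∈ Finset.Ico v.2 (B + 1), V (v.1, k) with hσ
  have hσ_above : ∀ a m, B < m → σ (a, m) = 0 := fun a m hm => by
    simp [hσ, Finset.Ico_eq_empty_of_le (show B + 1 ≤ m by omega)]
  have hup : ∀ a m, σ (a, m + 1) - σ (a, m) = V (a, m) := by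
    intro a m
    rcases le_or_gt m B with hm | hm
    · simp only [hσ, ← Finset.insert_Ico_add_one_left_eq_Ico (show m < B + 1 by omega),
        Finset.sum_insert (by simp : m ∉ Finset.Ico (m + 1) (B + 1))]
      abel
    · rw [hσ_above a _ (by omega), hσ_above a m hm, hV a m hm, sub_zero]
  refine ⟨σ, hσ_above, hup, fun a m => ?_⟩
  -- the defect `σ (a + 1, m) - σ (a, m) - H (a, m)` is constant in `m` and vanishes above `B`
  have hconst := Function.Periodic.eq_of_period_one
    (f := fun m => σ (a + 1, m) - σ (a, m) - H (a, m)) (fun m => by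
      have hH' : H (a, m + 1) = H (a, m) + V (a + 1, m) - V (a, m) := by rw [hclosed]; abel
      simp only [hH', ← hup a m, ← hup (a + 1) m]
      abel) m (B + 1)
  simp only [hσ_above _ (B + 1) (by omega), hH a (B + 1) (by omega), sub_zero] at hconst
  exact sub_eq_zero.mp hconst

/-- A discrete Poincaré lemma. -/
theorem exists_finite_support_potential {V H : ℤ × ℤ → A}
    (hclosed : ∀ a m, H (a, m) + V (a + 1, m) = V (a, m) + H (a, m + 1))
    (hV : (Function.support V).Finite) (hH : (Function.support H).Finite) :
    ∃ σ : ℤ × ℤ → A, (Function.support σ).Finite ∧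
      (∀ a m, σ (a, m + 1) - σ (a, m) = V (a, m)) ∧
      ∀ a m, σ (a + 1, m) - σ (a, m) = H (a, m) := by
  obtain ⟨B, hB⟩ := ((hV.union hH).image fun v : ℤ × ℤ => max |v.1| |v.2|).bddAbove
  have hbox : ∀ a m, B < |a| ∨ B < |m| → V (a, m) = 0 ∧ H (a, m) = 0 := by
    intro a m hout
    by_contra hne
    have := hB ⟨(a, m), not_and_or.mp hne, rfl⟩
    simp only [max_le_iff] at this
    omega
  obtain ⟨σ, hσ_above, hup, hright⟩ := exists_potential_of_eq_zero_above hclosed (B := B)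
    (fun a m hm => (hbox a m (Or.inr (hm.trans_le (le_abs_self m)))).1)
    (fun a m hm => (hbox a m (Or.inr (hm.trans_le (le_abs_self m)))).2)
  refine ⟨σ, ?_, hup, hright⟩
  have hcol : ∀ a m, B < |a| → σ (a, m) = 0 := fun a m ha => by
    rw [Function.Periodic.eq_of_period_one (f := fun m => σ (a, m))
      (fun m => by rw [← sub_eq_zero, hup, (hbox a m (Or.inl ha)).1]) m (B + 1)]
    exact hσ_above a _ (by omega)
  have hrow : ∀ a m, m < -B → σ (a, m) = σ (B + 1, m) := fun a m hm =>
    Function.Periodic.eq_of_period_one (f := fun a => σ (a, m)) (fun a => by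
      rw [← sub_eq_zero, hright, (hbox a m (by have := neg_abs_le m; omega)).2]) a (B + 1)
  refine (Set.finite_Icc (-B, -B) (B, B)).subset fun v hv => ?_
  obtain ⟨a, m⟩ := v
  by_contra hout
  simp only [Set.mem_Icc, Prod.mk_le_mk, not_and_or, not_le] at hout
  apply hv
  rcases lt_or_ge B |a| with ha | ha
  · exact hcol a m ha
  rcases lt_or_ge B m with hm | hm
  · exact hσ_above a m hm
  have hB : 0 ≤ B := (abs_nonneg a).trans ha
  rw [hrow a m (by rw [abs_le] at ha; omega), hcol _ _ (by rw [abs_of_pos (by omega)]; omega)]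

end Potential

namespace CP

/-- The edge of `ℒ₁ ∪ ℒ₂` through the midpoint of the `G`-edge `(a, m) — (a, m + 1)`; it crosses
whichever of the two faces beside that edge is black. -/
def crossUp (a m : ℤ) : BEdge := ((if Even (a + m) then a else a - 1, m), true)

/-- The edge of `ℒ₁ ∪ ℒ₂` through the midpoint of the `G`-edge `(a, m) — (a + 1, m)`. -/
def crossRight (a m : ℤ) : BEdge := ((a, if Even (a + m) then m else m - 1), false)

theorem ZAdj.symm {u v : ℤ × ℤ} (h : ZAdj u v) : ZAdj v u := by
  unfold ZAdj at *; rwa [abs_sub_comm, abs_sub_comm v.2]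

theorem ZAdj.induction {P : ℤ × ℤ → ℤ × ℤ → Prop} (hsymm : ∀ u v, P u v → P v u)
    (hup : ∀ a m, P (a, m) (a, m + 1)) (hright : ∀ a m, P (a, m) (a + 1, m))
    {u v : ℤ × ℤ} (h : ZAdj u v) : P u v := by
  obtain ⟨a, m⟩ := u
  obtain ⟨b, k⟩ := v
  simp only [ZAdj] at h
  have : (a = b + 1 ∧ m = k) ∨ (b = a + 1 ∧ m = k) ∨ (a = b ∧ m = k + 1) ∨
      (a = b ∧ k = m + 1) := by
    rcases abs_cases (a - b) with ⟨_, _⟩ | ⟨_, _⟩ <;>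
      rcases abs_cases (m - k) with ⟨_, _⟩ | ⟨_, _⟩ <;> omega
  rcases this with ⟨rfl, rfl⟩ | ⟨rfl, rfl⟩ | ⟨rfl, rfl⟩ | ⟨rfl, rfl⟩
  · exact hsymm _ _ (hright b m)
  · exact hright a m
  · exact hsymm _ _ (hup a k)
  · exact hup a m

theorem crossesG_symm {e : BEdge} {u v : ℤ × ℤ} (h : crossesG e u v) : crossesG e v u := by
  obtain ⟨huv, h⟩ := h
  exact ⟨ZAdj.symm huv, by rwa [add_comm v.1, add_comm v.2]⟩

theorem crossesG_crossUp (a m : ℤ) : crossesG (crossUp a m) (a, m) (a, m + 1) := by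
  refine ⟨by simp [ZAdj], ?_⟩
  by_cases h : Even (a + m) <;> simp [crossUp, h] <;> omega

theorem crossesG_crossRight (a m : ℤ) : crossesG (crossRight a m) (a, m) (a + 1, m) := by
  refine ⟨by simp [ZAdj], ?_⟩
  by_cases h : Even (a + m) <;> simp [crossRight, h] <;> omega

theorem eq_of_crossesG {e e' : BEdge} (he : IsBlackFace e.1) (he' : IsBlackFace e'.1)
    {u v : ℤ × ℤ} (h : crossesG e u v) (h' : crossesG e' u v) : e = e' := by
  obtain ⟨⟨c, d⟩, b⟩ := e
  obtain ⟨⟨c', d'⟩, b'⟩ := e'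
  simp only [IsBlackFace, Int.even_iff] at he he'
  obtain ⟨-, h⟩ := h
  obtain ⟨-, h'⟩ := h'
  cases b <;> cases b' <;> simp at h h' ⊢ <;> omega

theorem isBlackFace_of_contourCfg {ω : Config} {e : BEdge} (h : contourCfg ω e = true) :
    IsBlackFace e.1 := by
  by_contra hb
  simp [contourCfg, hb] at h

theorem contourCfg_crossUp {ω : Config} (hω : Constrained ω) (a m : ℤ) :
    contourCfg ω (crossUp a m) = (ω (a, m) != ω (a, m + 1)) := by
  by_cases he : Even (a + m)
  · simp [crossUp, contourCfg, IsBlackFace, he]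
  · have hb : Even (a - 1 + m) := by rw [Int.even_iff]; have := Int.not_even_iff.mp he; omega
    have hc := hω (a - 1) m hb
    simp only [sub_add_cancel] at hc
    simp only [crossUp, contourCfg, IsBlackFace, he, hb, if_true, if_false]
    rcases hc with ⟨h1, h2⟩ | ⟨h1, h2⟩ <;> simp [h1, h2]

theorem contourCfg_crossRight {ω : Config} (hω : Constrained ω) (a m : ℤ) :
    contourCfg ω (crossRight a m) = (ω (a, m) != ω (a + 1, m)) := by
  by_cases he : Even (a + m)
  · simp [crossRight, contourCfg, IsBlackFace, he]
  · have hb : Even (a + (m - 1)) := by rw [Int.even_iff]; have := Int.not_even_iff.mp he; omega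
    have hc := hω a (m - 1) hb
    simp only [sub_add_cancel] at hc
    simp only [crossRight, contourCfg, IsBlackFace, he, hb, if_true, if_false, Bool.false_eq_true]
    rcases hc with ⟨h1, h2⟩ | ⟨h1, h2⟩ <;> simp [h1, h2]

theorem isBlackFace_crossUp (a m : ℤ) : IsBlackFace (crossUp a m).1 := by
  by_cases h : Even (a + m)
  · simp [crossUp, IsBlackFace, h]
  · simp only [crossUp, IsBlackFace, h, if_false, Int.even_iff]
    have := Int.not_even_iff.mp h; omega

theorem isBlackFace_crossRight (a m : ℤ) : IsBlackFace (crossRight a m).1 := by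
  by_cases h : Even (a + m)
  · simp [crossRight, IsBlackFace, h]
  · simp only [crossRight, IsBlackFace, h, if_false, Int.even_iff]
    have := Int.not_even_iff.mp h; omega

theorem exists_mem_crossesG_iff {S : Set BEdge} (hS : ∀ e ∈ S, IsBlackFace e.1) {e₀ : BEdge}
    (hb : IsBlackFace e₀.1) {u v : ℤ × ℤ} (h₀ : crossesG e₀ u v) :
    (∃ e ∈ S, crossesG e u v) ↔ e₀ ∈ S :=
  ⟨fun ⟨e, he, h⟩ => eq_of_crossesG (hS e he) hb h h₀ ▸ he, fun h => ⟨e₀, h, h₀⟩⟩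

theorem ne_iff_exists_contourCfg_crossesG {ω : Config} (hω : Constrained ω) {u v : ℤ × ℤ}
    (huv : ZAdj u v) : ω u ≠ ω v ↔ ∃ e, contourCfg ω e = true ∧ crossesG e u v := by
  have hS : ∀ e ∈ {e | contourCfg ω e = true}, IsBlackFace e.1 :=
    fun _ => isBlackFace_of_contourCfg
  refine ZAdj.induction (P := fun u v => ω u ≠ ω v ↔ ∃ e, contourCfg ω e = true ∧ crossesG e u v)
    (fun u v h => ?_) (fun a m => ?_) (fun a m => ?_) huv
  · simpa only [ne_comm, fun e => (⟨crossesG_symm, crossesG_symm⟩ : crossesG e u v ↔ _)] using h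
  · show _ ↔ ∃ e ∈ {e | contourCfg ω e = true}, _
    rw [exists_mem_crossesG_iff hS (isBlackFace_crossUp a m) (crossesG_crossUp a m),
      Set.mem_ofPred_eq, contourCfg_crossUp hω, bne_iff_ne]
  · show _ ↔ ∃ e ∈ {e | contourCfg ω e = true}, _
    rw [exists_mem_crossesG_iff hS (isBlackFace_crossRight a m) (crossesG_crossRight a m),
      Set.mem_ofPred_eq, contourCfg_crossRight hω, bne_iff_ne]

theorem contourCfg_of_mem_contourB {φ : BEdge → Bool} {e₀ e : BEdge} (h₀ : φ e₀ = true)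
    (h : e ∈ contourB φ e₀) : φ e = true := by
  induction h with
  | refl => exact h₀
  | tail _ hstep _ => exact hstep.2.1

theorem IsContourB.contourCfg_of_mem {φ : BEdge → Bool} {C : Set BEdge} (hC : IsContourB φ C)
    {e : BEdge} (he : e ∈ C) : φ e = true := by
  obtain ⟨e₀, h₀, rfl⟩ := hC
  exact contourCfg_of_mem_contourB h₀ he

theorem IsContourB.mem_of_shareEnd {φ : BEdge → Bool} {C : Set BEdge} (hC : IsContourB φ C)
    {e e' : BEdge} (he : e ∈ C) (he' : φ e' = true) (hs : shareEnd e e') : e' ∈ C := by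
  obtain ⟨e₀, h₀, rfl⟩ := hC
  exact he.tail ⟨contourCfg_of_mem_contourB h₀ he, he', hs⟩

theorem IsContourB.eq_contourB {φ : BEdge → Bool} {C : Set BEdge} (hC : IsContourB φ C)
    {e : BEdge} (he : e ∈ C) : C = contourB φ e := by
  obtain ⟨e₀, h₀, rfl⟩ := hC
  have : Std.Symm fun a b => φ a = true ∧ φ b = true ∧ shareEnd a b :=
    ⟨fun _ _ ⟨ha, hb, hs⟩ => ⟨hb, ha, by unfold shareEnd at *; tauto⟩⟩
  ext e'
  exact ⟨fun h' => (Std.Symm.symm (r := Relation.ReflTransGen _) _ _ he).trans h',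
    fun h' => he.trans h'⟩

theorem IsContour.eq_of_crossesG {ω : Config} {C C' : Set BEdge} (hC : IsContour ω C)
    (hC' : IsContour ω C') {e e' : BEdge} (he : e ∈ C) (he' : e' ∈ C') {u v : ℤ × ℤ}
    (h : crossesG e u v) (h' : crossesG e' u v) : C = C' := by
  obtain rfl := CP.eq_of_crossesG (isBlackFace_of_contourCfg (hC.contourCfg_of_mem he))
    (isBlackFace_of_contourCfg (hC'.contourCfg_of_mem he')) h h'
  rw [hC.eq_contourB he, hC'.eq_contourB he']

theorem ne_iff_exists_contour_crossesG {ω : Config} (hω : Constrained ω) {u v : ℤ × ℤ}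
    (huv : ZAdj u v) : ω u ≠ ω v ↔ ∃ C, IsContour ω C ∧ ∃ e ∈ C, crossesG e u v := by
  rw [ne_iff_exists_contourCfg_crossesG hω huv]
  constructor
  · rintro ⟨e, he, h⟩
    exact ⟨_, ⟨e, he, rfl⟩, e, Relation.ReflTransGen.refl, h⟩
  · rintro ⟨C, hC, e, he, h⟩
    exact ⟨e, hC.contourCfg_of_mem he, h⟩

def IsContourUnion (ω : Config) (S : Set BEdge) : Prop :=
  ∀ e ∈ S, contourCfg ω e = true ∧ ∀ e', contourCfg ω e' = true → shareEnd e e' → e' ∈ S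

theorem isContourUnion_sUnion {ω : Config} {𝒞 : Set (Set BEdge)}
    (h𝒞 : ∀ C ∈ 𝒞, IsContour ω C) : IsContourUnion ω (⋃₀ 𝒞) := by
  rintro e ⟨C, hC, he⟩
  exact ⟨(h𝒞 C hC).contourCfg_of_mem he,
    fun e' he' hs => ⟨C, hC, (h𝒞 C hC).mem_of_shareEnd he he' hs⟩⟩

theorem crossUp_add_one_of_even {a m : ℤ} (h : Even (a + m)) :
    crossUp (a + 1) m = crossUp a m := by
  have : ¬ Even (a + 1 + m) := by rw [Int.not_even_iff]; have := Int.even_iff.mp h; omega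
  simp [crossUp, h, this]

theorem crossRight_add_one_of_even {a m : ℤ} (h : Even (a + m)) :
    crossRight a (m + 1) = crossRight a m := by
  have : ¬ Even (a + (m + 1)) := by rw [Int.not_even_iff]; have := Int.even_iff.mp h; omega
  simp [crossRight, h, this]

def squareCrossings (a m : ℤ) : Set BEdge :=
  {crossUp a m, crossUp (a + 1) m, crossRight a m, crossRight a (m + 1)}

/-- Around a white face the four crossing edges meet at its centre. -/
theorem shareEnd_of_not_even {a m : ℤ} (h : ¬ Even (a + m)) {e e' : BEdge}
    (he : e ∈ squareCrossings a m) (he' : e' ∈ squareCrossings a m) : shareEnd e e' := by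
  have h₁ : Even (a + 1 + m) := by rw [Int.even_iff]; have := Int.not_even_iff.mp h; omega
  have h₂ : Even (a + (m + 1)) := by rw [Int.even_iff]; have := Int.not_even_iff.mp h; omega
  have hc : ∀ f ∈ squareCrossings a m,
      (edgeEnds f).1 = (2 * a + 1, 2 * m + 1) ∨ (edgeEnds f).2 = (2 * a + 1, 2 * m + 1) := by
    simp only [squareCrossings, Set.mem_insert_iff, Set.mem_singleton_iff, forall_eq_or_imp,
      forall_eq]
    simp [crossUp, crossRight, edgeEnds, h, h₁, h₂]
    omega
  unfold shareEnd
  rcases hc e he with h | h <;> rcases hc e' he' with h' | h' <;> simp [h, h']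

theorem IsContourUnion.indicator_closed {ω : Config} (hω : Constrained ω) {S : Set BEdge}
    (hS : IsContourUnion ω S) (a m : ℤ) :
    S.indicator (1 : BEdge → ZMod 2) (crossRight a m) + S.indicator 1 (crossUp (a + 1) m) =
      S.indicator 1 (crossUp a m) + S.indicator 1 (crossRight a (m + 1)) := by
  by_cases hpar : Even (a + m)
  · rw [crossUp_add_one_of_even hpar, crossRight_add_one_of_even hpar, add_comm]
  by_cases hmeet : (squareCrossings a m ∩ S).Nonempty
  · obtain ⟨e₀, he₀, he₀S⟩ := hmeet
    have hmem : ∀ e ∈ squareCrossings a m, e ∈ S ↔ contourCfg ω e = true := fun e he =>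
      ⟨fun h => (hS e h).1, fun h => (hS e₀ he₀S).2 e h (shareEnd_of_not_even hpar he₀ he)⟩
    simp only [squareCrossings, Set.mem_insert_iff, Set.mem_singleton_iff, forall_eq_or_imp,
      forall_eq] at hmem
    simp only [Set.indicator_apply, Pi.one_apply, hmem.1, hmem.2.1, hmem.2.2.1, hmem.2.2.2,
      contourCfg_crossUp hω, contourCfg_crossRight hω]
    cases ω (a, m) <;> cases ω (a + 1, m) <;> cases ω (a, m + 1) <;> cases ω (a + 1, m + 1) <;>
      decide
  · simp only [Set.not_nonempty_iff_eq_empty, Set.eq_empty_iff_forall_notMem, Set.mem_inter_iff,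
      not_and, squareCrossings, Set.mem_insert_iff, Set.mem_singleton_iff, forall_eq_or_imp,
      forall_eq] at hmeet
    simp [Set.indicator_of_notMem, hmeet]

theorem finite_setOf_crossUp_mem {S : Set BEdge} (hS : S.Finite) :
    {v : ℤ × ℤ | crossUp v.1 v.2 ∈ S}.Finite := by
  refine ((hS.image fun e => e.1).union (hS.image fun e => (e.1.1 + 1, e.1.2))).subset ?_
  rintro ⟨a, m⟩ hv
  by_cases h : Even (a + m)
  · exact Or.inl ⟨_, hv, by simp [crossUp, h]⟩
  · exact Or.inr ⟨_, hv, by simp [crossUp, h]⟩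

theorem finite_setOf_crossRight_mem {S : Set BEdge} (hS : S.Finite) :
    {v : ℤ × ℤ | crossRight v.1 v.2 ∈ S}.Finite := by
  refine ((hS.image fun e => e.1).union (hS.image fun e => (e.1.1, e.1.2 + 1))).subset ?_
  rintro ⟨a, m⟩ hv
  by_cases h : Even (a + m)
  · exact Or.inl ⟨_, hv, by simp [crossRight, h]⟩
  · exact Or.inr ⟨_, hv, by simp [crossRight, h]⟩

theorem IsContourUnion.exists_potential {ω : Config} (hω : Constrained ω) {S : Set BEdge}
    (hS : IsContourUnion ω S) (hfin : S.Finite) :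
    ∃ σ : ℤ × ℤ → ZMod 2, (Function.support σ).Finite ∧
      ∀ u v, ZAdj u v → (σ u ≠ σ v ↔ ∃ e ∈ S, crossesG e u v) := by
  have hsupp : ∀ (f : ℤ × ℤ → BEdge), {v | f v ∈ S}.Finite →
      (Function.support fun v => S.indicator (1 : BEdge → ZMod 2) (f v)).Finite :=
    fun f hf => hf.subset fun v hv => by_contra fun h => hv (Set.indicator_of_notMem h 1)
  obtain ⟨σ, hσfin, hup, hright⟩ := exists_finite_support_potential
    (V := fun v => S.indicator 1 (crossUp v.1 v.2))
    (H := fun v => S.indicator 1 (crossRight v.1 v.2))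
    (hS.indicator_closed hω) (hsupp _ (finite_setOf_crossUp_mem hfin))
    (hsupp _ (finite_setOf_crossRight_mem hfin))
  have hblack : ∀ e ∈ S, IsBlackFace e.1 := fun e he => isBlackFace_of_contourCfg (hS e he).1
  have hind : ∀ e (x : ZMod 2), x = S.indicator 1 e → (x ≠ 0 ↔ e ∈ S) := by
    rintro e x rfl
    by_cases he : e ∈ S <;> simp [he]
  refine ⟨σ, hσfin, fun u v huv => ZAdj.induction
    (P := fun u v => σ u ≠ σ v ↔ ∃ e ∈ S, crossesG e u v) (fun u v h => ?_) (fun a m => ?_)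
    (fun a m => ?_) huv⟩
  · simpa only [ne_comm, fun e => (⟨crossesG_symm, crossesG_symm⟩ : crossesG e u v ↔ _)] using h
  · rw [ne_comm, ← sub_ne_zero, exists_mem_crossesG_iff hblack (isBlackFace_crossUp a m)
      (crossesG_crossUp a m)]
    exact hind _ _ (hup a m)
  · rw [ne_comm, ← sub_ne_zero, exists_mem_crossesG_iff hblack (isBlackFace_crossRight a m)
      (crossesG_crossRight a m)]
    exact hind _ _ (hright a m)

theorem IsContourUnion.even_card_crossesG {ω : Config} (hω : Constrained ω) {S : Set BEdge}
    (hS : IsContourUnion ω S) (hfin : S.Finite) {x y : ℤ × ℤ} (hxi : (cluster ω x).Infinite)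
    (hyi : (cluster ω y).Infinite) {n : ℕ} (p : Fin (n + 1) → ℤ × ℤ) (hp0 : p 0 = x)
    (hpn : p (Fin.last n) = y) (hadj : ∀ i : Fin n, ZAdj (p i.castSucc) (p i.succ)) :
    Even (Finset.univ.filter fun i : Fin n =>
      ∃ e ∈ S, crossesG e (p i.castSucc) (p i.succ)).card := by
  obtain ⟨σ, hσfin, hσ⟩ := hS.exists_potential hω hfin
  have hcluster : ∀ {z w}, SameCluster ω z w → σ z = σ w := by
    intro z w h
    induction h with
    | refl => rfl
    | tail _ hstep ih =>
      refine ih.trans (not_not.mp fun hne => ?_)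
      obtain ⟨e, he, hc⟩ := (hσ _ _ hstep.1).mp hne
      exact (ne_iff_exists_contourCfg_crossesG hω hstep.1).mpr ⟨e, (hS e he).1, hc⟩ hstep.2
  have hzero : ∀ {z}, (cluster ω z).Infinite → σ z = 0 := fun hz => by
    obtain ⟨w, hw, hw0⟩ := hz.exists_notMem_finite hσfin
    rwa [hcluster hw, ← Function.notMem_support]
  rw [← ZMod.natCast_eq_zero_iff_even, Finset.filter_congr fun i _ => (hσ _ _ (hadj i)).symm,
    natCast_card_filter_ne_eq_sub, hp0, hpn, hzero hxi, hzero hyi, sub_zero]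

theorem exists_contourUnion_iff_finite_contour_crossesG (ω : Config) {ι : Type*} [Finite ι]
    (u v : ι → ℤ × ℤ) : ∃ S, IsContourUnion ω S ∧ S.Finite ∧ ∀ i,
      (∃ C, IsContour ω C ∧ C.Finite ∧ ∃ e ∈ C, crossesG e (u i) (v i)) ↔
        ∃ e ∈ S, crossesG e (u i) (v i) := by
  set 𝒞 := {C | IsContour ω C ∧ C.Finite ∧ ∃ i, ∃ e ∈ C, crossesG e (u i) (v i)}
  have h𝒞 : 𝒞.Finite := by
    refine (Set.finite_iUnion fun i => Set.Subsingleton.finite (s :=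
      {C | IsContour ω C ∧ ∃ e ∈ C, crossesG e (u i) (v i)}) ?_).subset ?_
    · rintro C ⟨hC, e, he, h⟩ C' ⟨hC', e', he', h'⟩
      exact hC.eq_of_crossesG hC' he he' h h'
    · rintro C ⟨hC, -, i, hcross⟩
      exact Set.mem_iUnion.mpr ⟨i, hC, hcross⟩
  refine ⟨⋃₀ 𝒞, isContourUnion_sUnion fun C hC => hC.1, h𝒞.sUnion fun C hC => hC.2.1,
    fun i => ⟨?_, ?_⟩⟩
  · rintro ⟨C, hC, hCfin, e, he, h⟩
    exact ⟨e, ⟨C, ⟨hC, hCfin, i, e, he, h⟩, he⟩, h⟩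
  · rintro ⟨e, ⟨C, ⟨hC, hCfin, -⟩, he⟩, h⟩
    exact ⟨C, hC, hCfin, e, he, h⟩

theorem ne_iff_infinite_or_finite_contour_crossesG {ω : Config} (hω : Constrained ω)
    {u v : ℤ × ℤ} (huv : ZAdj u v) : ω u ≠ ω v ↔
      (∃ C, IsContour ω C ∧ C.Infinite ∧ ∃ e ∈ C, crossesG e u v) ∨
        ∃ C, IsContour ω C ∧ C.Finite ∧ ∃ e ∈ C, crossesG e u v := by
  rw [ne_iff_exists_contour_crossesG hω huv]
  constructor
  · rintro ⟨C, hC, hcross⟩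
    rcases C.finite_or_infinite with hCfin | hCinf
    exacts [Or.inr ⟨C, hC, hCfin, hcross⟩, Or.inl ⟨C, hC, hCinf, hcross⟩]
  · rintro (⟨C, hC, -, hcross⟩ | ⟨C, hC, -, hcross⟩) <;> exact ⟨C, hC, hcross⟩

theorem not_infinite_and_finite_contour_crossesG {ω : Config} {u v : ℤ × ℤ} :
    ¬ ((∃ C, IsContour ω C ∧ C.Infinite ∧ ∃ e ∈ C, crossesG e u v) ∧
      ∃ C, IsContour ω C ∧ C.Finite ∧ ∃ e ∈ C, crossesG e u v) := by
  rintro ⟨⟨C, hC, hCinf, e, he, h⟩, ⟨C', hC', hC'fin, e', he', h'⟩⟩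
  exact hCinf (hC.eq_of_crossesG hC' he he' h h' ▸ hC'fin)

/-- Lemma 2.8 of the paper: a lattice path from an infinite 0-cluster
to an infinite 1-cluster crosses infinite contours an odd number of times; in
particular, there exists an infinite contour. -/
theorem path_crosses_infinite_contours_oddly
    (ω : Config) (hω : Constrained ω) (x y : ℤ × ℤ)
    (hx0 : ω x = false) (hxi : (cluster ω x).Infinite)
    (hy1 : ω y = true) (hyi : (cluster ω y).Infinite)
    (n : ℕ) (p : Fin (n + 1) → ℤ × ℤ) (hp0 : p 0 = x) (hpn : p (Fin.last n) = y)
    (hadj : ∀ i : Fin n, ZAdj (p i.castSucc) (p i.succ)) :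
    Odd (Finset.univ.filter (fun i : Fin n =>
        ∃ C, IsContour ω C ∧ C.Infinite ∧ ∃ e ∈ C, crossesG e (p i.castSucc) (p i.succ))).card ∧
    ∃ C, IsContour ω C ∧ C.Infinite := by
  obtain ⟨S, hS, hSfin, hSiff⟩ :=
    exists_contourUnion_iff_finite_contour_crossesG ω (fun i : Fin n => p i.castSucc) (p ·.succ)
  have hflips : ((Finset.univ.filter fun i : Fin n => ω (p i.castSucc) ≠ ω (p i.succ)).card :
      ZMod 2) = 1 := by
    have hbool : ∀ a b : Bool, a ≠ b ↔ (if a then (1 : ZMod 2) else 0) ≠ if b then 1 else 0 := by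
      decide
    rw [Finset.filter_congr fun i _ => hbool _ _, natCast_card_filter_ne_eq_sub
      (fun v => if ω v then (1 : ZMod 2) else 0), hp0, hpn, hx0, hy1]
    rfl
  have hsplit := Finset.card_filter_eq_add_of_iff_or (s := Finset.univ)
    (fun i _ => ne_iff_infinite_or_finite_contour_crossesG hω (hadj i))
    (fun _ _ => not_infinite_and_finite_contour_crossesG)
  have hfinite := hS.even_card_crossesG hω hSfin hxi hyi p hp0 hpn hadj
  rw [← Finset.filter_congr fun i _ => hSiff i] at hfinite
  have hodd : Odd (Finset.univ.filter fun i : Fin n =>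
      ∃ C, IsContour ω C ∧ C.Infinite ∧ ∃ e ∈ C, crossesG e (p i.castSucc) (p i.succ)).card := by
    rw [← ZMod.natCast_eq_one_iff_odd, ← hflips, hsplit, Nat.cast_add,
      ZMod.natCast_eq_zero_iff_even.mpr hfinite, add_zero]
  obtain ⟨i, hi⟩ := Finset.card_pos.mp hodd.pos
  obtain ⟨C, hC, hCinf, -⟩ := (Finset.mem_filter.mp hi).2
  exact ⟨hodd, C, hC, hCinf⟩

end CP

end
end

section
/- Let k be a positive integer and let μ be a probability measure on the constrained configuration space Ω satisfying (Ak1). Then μ-almost surely no contour of φ(ω) has more than two ends. -/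
open scoped Classical ENNReal
open MeasureTheory

noncomputable section

namespace CP

/-!
The Burton–Keane argument. If a contour has three ends, removing a finite set of its edges leaves
three infinite pieces; enlarging that set to a finite connected core `F` gives a trifurcation
`(F, e)`, and there are only countably many candidates `(F, e)`. Fix one, inside the box of size
`N`. By (Ak1) its translates by an `n × n` grid of vectors spaced more than `2N` apart all have the
same probability `δ`. In any configuration the translates that occur have disjoint cores in a box
of size `O(n)`, and their ends all reach the `O(n)` edges of the surrounding annulus. Each of them
splits the annulus edges of its cluster into three parts, any two of these partitions are distinct
and compatible, so by the Burton–Keane partition lemma at most `O(n)` translates occur. Hence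
`n² δ = O(n)`, and `δ = 0`.
-/

open Relation

section Components

variable {α : Type*} {r : α → α → Prop} {S T G : Set α} {e x y : α}

variable (r) in
def RestrictRel (S : Set α) (a b : α) : Prop := a ∈ S ∧ b ∈ S ∧ r a b

variable (r) in
def componentIn (S : Set α) (e : α) : Set α := {x | ReflTransGen (RestrictRel r S) e x}

instance [Std.Symm r] : Std.Symm (RestrictRel r S) :=
  ⟨fun _ _ ⟨ha, hb, h⟩ => ⟨hb, ha, symm h⟩⟩

lemma mem_componentIn_self : e ∈ componentIn r S e := .refl

lemma reflTransGen_restrictRel_mono (h : S ⊆ T) {a b : α}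
    (hab : ReflTransGen (RestrictRel r S) a b) : ReflTransGen (RestrictRel r T) a b :=
  ReflTransGen.mono (fun _ _ ⟨ha, hb, h'⟩ => ⟨h ha, h hb, h'⟩) _ _ hab

lemma componentIn_mono (h : S ⊆ T) : componentIn r S e ⊆ componentIn r T e :=
  fun _ => reflTransGen_restrictRel_mono h

lemma mem_of_mem_componentIn (he : e ∈ S) (hx : x ∈ componentIn r S e) : x ∈ S := by
  induction hx with
  | refl => exact he
  | tail _ hbc _ => exact hbc.2.1

lemma componentIn_trans (hx : x ∈ componentIn r S e) (hy : y ∈ componentIn r S x) :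
    y ∈ componentIn r S e :=
  ReflTransGen.trans hx hy

lemma mem_of_componentIn_infinite (h : (componentIn r S e).Infinite) : e ∈ S := by
  by_contra he
  refine h ((Set.finite_singleton e).subset fun x hx => ?_)
  rcases ReflTransGen.cases_head hx with rfl | ⟨c, hec, _⟩
  exacts [rfl, absurd hec.1 he]

section Symm

variable [Std.Symm r]

lemma componentIn_comm (hx : x ∈ componentIn r S e) : e ∈ componentIn r S x := symm hx

lemma componentIn_eq_of_mem (hx : x ∈ componentIn r S e) :
    componentIn r S x = componentIn r S e :=
  Set.ext fun _ => ⟨componentIn_trans hx, componentIn_trans (componentIn_comm hx)⟩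

lemma mem_componentIn_iff_of_mem (hy : y ∈ componentIn r S x) {a : α} :
    y ∈ componentIn r S a ↔ x ∈ componentIn r S a := by
  constructor <;> intro h
  · exact componentIn_trans h (componentIn_comm hy)
  · exact componentIn_trans h hy

lemma mem_componentIn_iff_componentIn_eq :
    y ∈ componentIn r S x ↔ componentIn r S y = componentIn r S x :=
  ⟨componentIn_eq_of_mem, fun h => h ▸ mem_componentIn_self⟩

end Symm

lemma componentIn_diff_subset {F : Set α}
    (h : ∀ y ∈ componentIn r S x, y ∈ G → y ∈ F) :
    componentIn r (S \ F) x ⊆ componentIn r (S \ G) x := by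
  intro y hy
  induction hy with
  | refl => exact .refl
  | @tail b c hxb hbc ih =>
    have hS : componentIn r (S \ F) x ⊆ componentIn r S x := componentIn_mono Set.sdiff_subset
    exact ih.tail ⟨⟨hbc.1.1, fun hb => hbc.1.2 (h b (hS hxb) hb)⟩,
      ⟨hbc.2.1.1, fun hc => hbc.2.1.2 (h c (hS (hxb.tail hbc)) hc)⟩, hbc.2.2⟩

lemma componentIn_diff_eq_of_disjoint (h : Disjoint (componentIn r S x) G) :
    componentIn r (S \ G) x = componentIn r S x := by
  refine (componentIn_mono Set.sdiff_subset).antisymm ?_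
  simpa using componentIn_diff_subset (F := ∅) (fun y hy hyG => h.notMem_of_mem_left hy hyG)

lemma componentIn_componentIn_diff {F : Set α} (he : e ∈ S) (hx : x ∈ componentIn r S e) :
    componentIn r (componentIn r S e \ F) x = componentIn r (S \ F) x := by
  have hsub : componentIn r S e \ F ⊆ S \ F := fun y hy => ⟨mem_of_mem_componentIn he hy.1, hy.2⟩
  refine (componentIn_mono hsub).antisymm ?_
  intro y hy
  induction hy with
  | refl => exact .refl
  | @tail b c hxb hbc ih =>
    have hS : componentIn r (S \ F) x ⊆ componentIn r S x := componentIn_mono Set.sdiff_subset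
    exact ih.tail ⟨⟨componentIn_trans hx (hS hxb), hbc.1.2⟩,
      ⟨componentIn_trans hx (hS (hxb.tail hbc)), hbc.2.1.2⟩, hbc.2.2⟩

/-- `a` is where a path from `e` to `x` enters `S \ G` for the last time. -/
lemma exists_entry_of_mem_componentIn (hx : x ∈ componentIn r S e) (hxG : x ∉ G) :
    ∃ a ∈ componentIn r S e, a ∉ G ∧ (a = e ∨ ∃ g ∈ G, r g a) ∧
      x ∈ componentIn r (S \ G) a := by
  induction hx with
  | refl => exact ⟨e, .refl, hxG, .inl rfl, .refl⟩
  | @tail b c heb hbc ih =>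
    by_cases hbG : b ∈ G
    · exact ⟨c, heb.tail hbc, hxG, .inr ⟨b, hbG, hbc.2.2⟩, .refl⟩
    · obtain ⟨a, hae, haG, hstart, hba⟩ := ih hbG
      exact ⟨a, hae, haG, hstart, hba.tail ⟨⟨hbc.1, hbG⟩, ⟨hbc.2.1, hxG⟩, hbc.2.2⟩⟩

lemma exists_componentIn_diff_infinite (hr : ∀ a, {b | r a b}.Finite)
    (h : (componentIn r S e).Infinite) (G : Finset α) :
    ∃ x ∈ componentIn r S e, x ∉ G ∧ (componentIn r (S \ G) x).Infinite := by
  by_contra! hfin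
  set entries : Set α := (insert e (⋃ g ∈ (G : Set α), {b | r g b})) ∩ (componentIn r S e \ G)
  have hentries : entries.Finite :=
    ((G.finite_toSet.biUnion fun g _ => hr g).insert e).inter_of_left _
  have hcover : componentIn r S e \ G ⊆ ⋃ a ∈ entries, componentIn r (S \ G) a := by
    intro x ⟨hx, hxG⟩
    obtain ⟨a, hae, haG, hstart, hxa⟩ := exists_entry_of_mem_componentIn hx hxG
    refine Set.mem_biUnion ⟨?_, hae, haG⟩ hxa
    rcases hstart with rfl | ⟨g, hg, hga⟩
    exacts [Set.mem_insert _ _, Set.mem_insert_of_mem _ (Set.mem_biUnion hg hga)]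
  exact (h.sdiff G.finite_toSet) ((hentries.biUnion fun a ha => hfin a ha.2.1 ha.2.2).subset hcover)

lemma exists_mem_sdiff_of_componentIn_infinite [DecidableEq α] {B B' : Finset α}
    (hBB' : ∀ a b, r a b → a ∈ B → b ∈ B') (he : e ∈ B) (h : (componentIn r S e).Infinite) :
    ∃ y ∈ componentIn r S e, y ∈ B' \ B := by
  obtain ⟨x, hx, hxB⟩ := h.exists_notMem_finset B
  induction hx with
  | refl => exact absurd he hxB
  | @tail c d hec hcd ih =>
    by_cases hc : c ∈ B
    · exact ⟨d, hec.tail hcd, Finset.mem_sdiff.2 ⟨hBB' c d hcd.2.2 hc, hxB⟩⟩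
    · exact ih hc

end Components

section Connected

variable {α : Type*} {r : α → α → Prop} {S T : Set α} {e x : α}

variable (r) in
/-- Rooted form of connectedness (the usual one for symmetric `r`); it includes nonemptiness. -/
def IsConnectedIn (A : Set α) : Prop := ∃ ρ ∈ A, ∀ a ∈ A, ReflTransGen (RestrictRel r A) ρ a

lemma IsConnectedIn.subset_componentIn [Std.Symm r] {A : Set α} (hA : IsConnectedIn r A)
    (hAT : A ⊆ T) (ha : x ∈ A) : A ⊆ componentIn r T x := by
  obtain ⟨ρ, -, hρ⟩ := hA
  have hcomp : A ⊆ componentIn r T ρ := fun b hb => reflTransGen_restrictRel_mono hAT (hρ b hb)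
  rwa [← componentIn_eq_of_mem (hcomp ha)] at hcomp

lemma exists_finset_reflTransGen_of_mem_componentIn (hx : x ∈ componentIn r S e) :
    ∃ T : Finset α, e ∈ T ∧ x ∈ T ∧ ↑T ⊆ componentIn r S e ∧
      ∀ t ∈ T, ReflTransGen (RestrictRel r ↑T) e t := by
  induction hx with
  | refl => exact ⟨{e}, by simp, by simp, by simpa using mem_componentIn_self,
      fun t ht => by rw [Finset.mem_singleton.mp ht]⟩
  | @tail b c heb hbc ih =>
    obtain ⟨T, heT, hbT, hTS, hT⟩ := ih
    have hsub : (T : Set α) ⊆ ↑(insert c T) := by simp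
    refine ⟨insert c T, by simp [heT], by simp, ?_, ?_⟩
    · simpa [Set.insert_subset_iff] using ⟨heb.tail hbc, hTS⟩
    · intro t ht
      rcases Finset.mem_insert.mp ht with rfl | ht
      · exact (reflTransGen_restrictRel_mono hsub (hT b hbT)).tail
          ⟨hsub hbT, by simp, hbc.2.2⟩
      · exact reflTransGen_restrictRel_mono hsub (hT t ht)

lemma exists_isConnectedIn_superset (A : Finset α) (hA : ↑A ⊆ componentIn r S e) :
    ∃ F : Finset α, A ⊆ F ∧ ↑F ⊆ componentIn r S e ∧ IsConnectedIn r ↑F := by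
  suffices ∃ F : Finset α, e ∈ F ∧ A ⊆ F ∧ ↑F ⊆ componentIn r S e ∧
      ∀ t ∈ F, ReflTransGen (RestrictRel r ↑F) e t by
    obtain ⟨F, heF, hAF, hFS, hF⟩ := this
    exact ⟨F, hAF, hFS, e, heF, hF⟩
  induction A using Finset.induction_on with
  | empty => exact ⟨{e}, by simp, by simp, by simpa using mem_componentIn_self,
      fun t ht => by rw [Finset.mem_singleton.mp ht]⟩
  | insert a A _ ih =>
    rw [Finset.coe_insert, Set.insert_subset_iff] at hA
    obtain ⟨F, heF, hAF, hFS, hF⟩ := ih hA.2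
    obtain ⟨T, heT, haT, hTS, hT⟩ := exists_finset_reflTransGen_of_mem_componentIn hA.1
    refine ⟨F ∪ T, by simp [heF], ?_, by simpa using ⟨hFS, hTS⟩, ?_⟩
    · exact Finset.insert_subset (by simp [haT]) (hAF.trans Finset.subset_union_left)
    · intro t ht
      rcases Finset.mem_union.mp ht with ht | ht
      · exact reflTransGen_restrictRel_mono (by simp) (hF t ht)
      · exact reflTransGen_restrictRel_mono (by simp) (hT t ht)

end Connected

section Trifurcation

variable {α : Type*} {r : α → α → Prop}

variable (r) in
/-- A trifurcation in the sense of Burton and Keane, with finite core `F` and three ends `e i`. -/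
structure IsTrifurcation (S : Set α) (F : Finset α) (e : Fin 3 → α) : Prop where
  isConnectedIn : IsConnectedIn r ↑F
  core_subset : ↑F ⊆ componentIn r S (e 0)
  mem_componentIn : ∀ i, e i ∈ componentIn r S (e 0)
  infinite : ∀ i, (componentIn r (S \ ↑F) (e i)).Infinite
  separated : Pairwise fun i j => e j ∉ componentIn r (S \ ↑F) (e i)

variable [Std.Symm r]

/-- A path from `x` to `F` enters `S \ F` for the last time next to `F`; that piece of the path
avoids `F'`, since otherwise it would join `x` to `F'` off `F`. -/
lemma mem_componentIn_diff_of_not_mem {S F F' : Set α} {f g x : α}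
    (hF : IsConnectedIn r F) (hF' : IsConnectedIn r F') (hFF' : Disjoint F F')
    (hFS : F ⊆ S) (hF'S : F' ⊆ S) (hf : f ∈ F) (hg : g ∈ F')
    (hx : x ∈ S \ F) (hfx : f ∈ componentIn r S x) (hxg : x ∉ componentIn r (S \ F) g) :
    x ∈ componentIn r (S \ F') f := by
  have hF'g : F' ⊆ componentIn r (S \ F) g :=
    hF'.subset_componentIn (fun y hy => ⟨hF'S hy, hFF'.notMem_of_mem_right hy⟩) hg
  have hFf : F ⊆ componentIn r (S \ F') f :=
    hF.subset_componentIn (fun y hy => ⟨hFS hy, hFF'.notMem_of_mem_left hy⟩) hf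
  obtain ⟨a, haf, haF, hstart, hxa⟩ :=
    exists_entry_of_mem_componentIn (componentIn_comm hfx) hx.2
  obtain ⟨z, hzF, hza⟩ := hstart.resolve_left (by rintro rfl; exact haF hf)
  have hKF' : Disjoint (componentIn r (S \ F) a) F' := by
    refine Set.disjoint_left.2 fun y hy hyF' => hxg ?_
    exact componentIn_eq_of_mem (hF'g hyF') ▸ componentIn_trans (componentIn_comm hy) hxa
  have ha : a ∈ componentIn r (S \ F') f :=
    (hFf hzF).tail ⟨⟨hFS hzF, hFF'.notMem_of_mem_left hzF⟩,
      ⟨mem_of_mem_componentIn (hFS hf) haf, hKF'.notMem_of_mem_left mem_componentIn_self⟩, hza⟩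
  rw [← componentIn_diff_eq_of_disjoint hKF'] at hxa
  exact componentIn_trans ha (componentIn_mono (Set.sdiff_subset_sdiff_left Set.sdiff_subset) hxa)

/-- Enlarge the part of `F₀` in the cluster to a finite connected core `F`, and pick in each of the
three infinite components a point whose component still is infinite once `F` is removed. -/
lemma exists_isTrifurcation (hr : ∀ a, {b | r a b}.Finite) {S F₀ : Set α} {e₀ : α}
    (he₀ : e₀ ∈ S) (hF₀ : F₀.Finite) {e : Fin 3 → α} (he : ∀ i, e i ∈ componentIn r S e₀)
    (hinf : ∀ i, (componentIn r (componentIn r S e₀ \ F₀) (e i)).Infinite)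
    (hne : Pairwise fun i j => componentIn r (componentIn r S e₀ \ F₀) (e i) ≠
      componentIn r (componentIn r S e₀ \ F₀) (e j)) :
    ∃ F x, IsTrifurcation r S F x := by
  set C := componentIn r S e₀
  have hcomp i : componentIn r (C \ F₀) (e i) = componentIn r (S \ F₀) (e i) :=
    componentIn_componentIn_diff he₀ (he i)
  obtain ⟨F, hF₀F, hFC, hFconn⟩ :=
    exists_isConnectedIn_superset (r := r) (S := S) (e := e₀) (hF₀.toFinset.filter (· ∈ C))
      (by intro y; simp [C])
  have hx i : ∃ x ∈ componentIn r (S \ F₀) (e i), x ∉ F ∧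
      (componentIn r ((S \ F₀) \ F) x).Infinite :=
    exists_componentIn_diff_infinite hr (hcomp i ▸ hinf i) F
  choose x hxe hxF hxinf using hx
  have hxC i : x i ∈ C := componentIn_trans (he i) (componentIn_mono Set.sdiff_subset (hxe i))
  have hC : C = componentIn r S (x 0) := (componentIn_eq_of_mem (hxC 0)).symm
  refine ⟨F, x, hFconn, hC ▸ hFC, fun i => hC ▸ hxC i,
    fun i => (hxinf i).mono (componentIn_mono (Set.sdiff_subset_sdiff_left Set.sdiff_subset)), ?_⟩
  intro i j hij hji
  have hsub : componentIn r (S \ F) (x i) ⊆ componentIn r (S \ F₀) (x i) :=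
    componentIn_diff_subset fun y hy hyF₀ =>
      hF₀F (by simpa [hF₀, hyF₀] using componentIn_trans (hxC i) hy)
  rw [componentIn_eq_of_mem (hxe i)] at hsub
  apply hne hij
  rw [hcomp, hcomp, ← componentIn_eq_of_mem (hsub hji), componentIn_eq_of_mem (hxe j)]

end Trifurcation

section ThreePartitions

variable {α β : Type*} [DecidableEq α] [DecidableEq β] {Y B : Finset α}
  {P Q : Finset (Finset α)} {A C : Finset α} {f : α → β}

structure IsThreePartition (Y : Finset α) (P : Finset (Finset α)) : Prop where
  card_eq : P.card = 3
  nonempty : ∀ A ∈ P, A.Nonempty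
  subset : ∀ A ∈ P, A ⊆ Y
  disjoint : ∀ A ∈ P, ∀ B ∈ P, A ≠ B → Disjoint A B
  cover : ∀ y ∈ Y, ∃ A ∈ P, y ∈ A

def Compatible (Y : Finset α) (P Q : Finset (Finset α)) : Prop := ∃ A ∈ P, ∃ B ∈ Q, Y \ A ⊆ B

def IsCompatibleFamily (Y : Finset α) (ℱ : Finset (Finset (Finset α))) : Prop :=
  (∀ P ∈ ℱ, IsThreePartition Y P) ∧ (ℱ : Set (Finset (Finset α))).Pairwise (Compatible Y)

def IsSaturated (f : α → β) (Y : Finset α) (P : Finset (Finset α)) : Prop :=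
  ∀ A ∈ P, ∀ x ∈ Y, ∀ y ∈ A, f x = f y → x ∈ A

def contract (B : Finset α) (a₀ y : α) : α := if y ∈ B then y else a₀

lemma image_contract {a₀ : α} (ha₀ : a₀ ∈ Y) (hBY : B ⊆ Y) :
    Y.image (contract B a₀) = insert a₀ B := by
  ext z
  simp only [Finset.mem_image, Finset.mem_insert, contract]
  constructor
  · rintro ⟨y, -, rfl⟩
    split_ifs with hy <;> simp [hy]
  · rintro (rfl | hz)
    · by_cases hz : z ∈ B
      · exact ⟨z, hBY hz, if_pos hz⟩
      · exact ⟨z, ha₀, if_neg hz⟩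
    · exact ⟨z, hBY hz, if_pos hz⟩

namespace IsThreePartition

lemma card_eq_sum (hP : IsThreePartition Y P) : Y.card = ∑ A ∈ P, A.card := by
  have hY : Y = P.biUnion fun A => A := by
    ext y
    simp only [Finset.mem_biUnion]
    exact ⟨fun hy => hP.cover y hy, fun ⟨A, hA, hy⟩ => hP.subset A hA hy⟩
  rw [hY, Finset.card_biUnion fun A hA B hB hAB => hP.disjoint A hA B hB hAB]

lemma exists_ne_ne (hP : IsThreePartition Y P) (A B : Finset α) : ∃ C ∈ P, C ≠ A ∧ C ≠ B := by
  by_contra! h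
  have : P ⊆ {A, B} := fun C hC => by
    by_cases hCA : C = A
    · simp [hCA]
    · simp [h C hC hCA]
  have := (Finset.card_le_card this).trans Finset.card_le_two
  rw [hP.card_eq] at this
  omega

lemma sdiff_nonempty (hP : IsThreePartition Y P) (hA : A ∈ P) : (Y \ A).Nonempty := by
  obtain ⟨C, hC, hCA, -⟩ := hP.exists_ne_ne A A
  obtain ⟨y, hy⟩ := hP.nonempty C hC
  exact ⟨y, Finset.mem_sdiff.2 ⟨hP.subset C hC hy,
    Finset.disjoint_left.1 (hP.disjoint C hC A hA hCA) hy⟩⟩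

lemma subset_of_sdiff_subset (hP : IsThreePartition Y P) (hA : A ∈ P) (h : Y \ A ⊆ B)
    (hC : C ∈ P) (hCA : C ≠ A) : C ⊆ B := fun _ hy =>
  h (Finset.mem_sdiff.2 ⟨hP.subset C hC hy,
    Finset.disjoint_left.1 (hP.disjoint C hC A hA hCA) hy⟩)

lemma not_sdiff_subset (hP : IsThreePartition Y P) (hA : A ∈ P) (hB : B ∈ P) :
    ¬ Y \ A ⊆ B := fun h => by
  obtain ⟨C, hC, hCA, hCB⟩ := hP.exists_ne_ne A B
  obtain ⟨y, hy⟩ := hP.nonempty C hC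
  exact Finset.disjoint_left.1 (hP.disjoint C hC B hB hCB) hy
    (hP.subset_of_sdiff_subset hA h hC hCA hy)

lemma isSaturated_contract (hP : IsThreePartition Y P) (hA : A ∈ P) (hAB : Y \ A ⊆ B)
    {a₀ : α} (ha₀ : a₀ ∉ B) : IsSaturated (contract B a₀) Y P := by
  intro C hC x hx y hy hxy
  have hA' : ∀ z ∈ Y, z ∉ B → z ∈ A := fun z hz hzB => by
    by_contra hzA
    exact hzB (hAB (Finset.mem_sdiff.2 ⟨hz, hzA⟩))
  by_cases hxB : x ∈ B <;> by_cases hyB : y ∈ B <;>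
    simp only [contract, hxB, hyB, if_true, if_false] at hxy
  · exact hxy ▸ hy
  · exact absurd (hxy ▸ hxB) ha₀
  · exact absurd (hxy ▸ hyB) ha₀
  · have hCA : C = A := by
      by_contra hCA
      exact Finset.disjoint_left.1 (hP.disjoint C hC A hA hCA) hy (hA' y (hP.subset C hC hy) hyB)
    exact hCA ▸ hA' x hx hxB

lemma image (hP : IsThreePartition Y P) (hsat : IsSaturated f Y P) :
    IsThreePartition (Y.image f) (P.image (Finset.image f)) := by
  have hdisj : ∀ A ∈ P, ∀ B ∈ P, A ≠ B → Disjoint (A.image f) (B.image f) := by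
    intro A hA B hB hAB
    simp only [Finset.disjoint_left, Finset.mem_image]
    rintro _ ⟨a, ha, rfl⟩ ⟨b, hb, hba⟩
    exact Finset.disjoint_left.1 (hP.disjoint A hA B hB hAB) ha
      (hsat B hB a (hP.subset A hA ha) b hb hba.symm)
  refine ⟨?_, ?_, ?_, ?_, ?_⟩
  · rw [Finset.card_image_of_injOn, hP.card_eq]
    intro A hA B hB hAB
    by_contra hne
    obtain ⟨a, ha⟩ := hP.nonempty A hA
    exact Finset.disjoint_left.1 (hdisj A hA B hB hne) (Finset.mem_image_of_mem f ha)
      (hAB ▸ Finset.mem_image_of_mem f ha)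
  all_goals simp only [Finset.mem_image]
  · rintro _ ⟨A, hA, rfl⟩
    exact (hP.nonempty A hA).image f
  · rintro _ ⟨A, hA, rfl⟩
    exact Finset.image_subset_image (hP.subset A hA)
  · rintro _ ⟨A, hA, rfl⟩ _ ⟨B, hB, rfl⟩ hne
    exact hdisj A hA B hB fun h => hne (h ▸ rfl)
  · rintro _ ⟨y, hy, rfl⟩
    obtain ⟨A, hA, hyA⟩ := hP.cover y hy
    exact ⟨A.image f, ⟨A, hA, rfl⟩, Finset.mem_image_of_mem f hyA⟩

lemma image_filter_image (hP : IsThreePartition Y P) (hsat : IsSaturated f Y P) :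
    (P.image (Finset.image f)).image (fun X => Y.filter (f · ∈ X)) = P := by
  rw [Finset.image_image]
  convert Finset.image_id (s := P) using 1
  refine Finset.image_congr fun A hA => Finset.ext fun x => ?_
  simp only [Function.comp_apply, Finset.mem_filter, Finset.mem_image, id]
  exact ⟨fun ⟨hx, y, hy, hyx⟩ => hsat A hA x hx y hy hyx.symm,
    fun hx => ⟨hP.subset A hA hx, x, hx, rfl⟩⟩

end IsThreePartition

lemma Compatible.image (f : α → β) (h : Compatible Y P Q) :
    Compatible (Y.image f) (P.image (Finset.image f)) (Q.image (Finset.image f)) := by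
  obtain ⟨A, hA, B, hB, h⟩ := h
  refine ⟨A.image f, Finset.mem_image_of_mem _ hA, B.image f, Finset.mem_image_of_mem _ hB, ?_⟩
  intro z hz
  obtain ⟨hz, hzA⟩ := Finset.mem_sdiff.1 hz
  obtain ⟨y, hy, rfl⟩ := Finset.mem_image.1 hz
  exact Finset.mem_image_of_mem f
    (h (Finset.mem_sdiff.2 ⟨hy, fun hyA => hzA (Finset.mem_image_of_mem f hyA)⟩))

namespace IsCompatibleFamily

variable {ℱ 𝒢 : Finset (Finset (Finset α))}

lemma mono (hℱ : IsCompatibleFamily Y ℱ) (h : 𝒢 ⊆ ℱ) : IsCompatibleFamily Y 𝒢 :=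
  ⟨fun P hP => hℱ.1 P (h hP), hℱ.2.mono (by simpa using h)⟩

lemma image (hℱ : IsCompatibleFamily Y ℱ) (hsat : ∀ P ∈ ℱ, IsSaturated f Y P) :
    IsCompatibleFamily (Y.image f) (ℱ.image (·.image (Finset.image f))) ∧
      (ℱ.image (·.image (Finset.image f))).card = ℱ.card := by
  have hinj : Set.InjOn (fun P : Finset (Finset α) => P.image (Finset.image f)) ℱ := by
    intro P hP P' hP' h
    rw [← (hℱ.1 P hP).image_filter_image (hsat P hP),
      ← (hℱ.1 P' hP').image_filter_image (hsat P' hP')]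
    exact congrArg _ h
  refine ⟨⟨?_, ?_⟩, Finset.card_image_of_injOn hinj⟩
  · simp only [Finset.mem_image]
    rintro _ ⟨P, hP, rfl⟩
    exact (hℱ.1 P hP).image (hsat P hP)
  · simp only [Finset.coe_image]
    rintro _ ⟨P, hP, rfl⟩ _ ⟨P', hP', rfl⟩ hne
    exact (hℱ.2 hP hP' fun h => hne (h ▸ rfl)).image f

lemma exists_minimal_part (hℱ : IsCompatibleFamily Y ℱ) (hne : ℱ.Nonempty) :
    ∃ P₀ ∈ ℱ, ∃ A ∈ P₀, ∀ Q ∈ ℱ, ∀ R ∈ Q, R ⊆ A → R = A := by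
  obtain ⟨P, hP⟩ := hne
  obtain ⟨A, hA⟩ := Finset.card_pos.1 (by rw [(hℱ.1 P hP).card_eq]; norm_num)
  obtain ⟨A, hmin⟩ :=
    Finset.exists_minimal (s := ℱ.biUnion id) ⟨A, Finset.mem_biUnion.2 ⟨P, hP, hA⟩⟩
  obtain ⟨P₀, hP₀, hAP₀⟩ := Finset.mem_biUnion.1 hmin.prop
  exact ⟨P₀, hP₀, A, hAP₀, fun Q hQ R hR hRA =>
    (hmin.2 (Finset.mem_biUnion.2 ⟨Q, hQ, hR⟩) hRA).antisymm' hRA⟩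

lemma exists_branch (hℱ : IsCompatibleFamily Y ℱ) {P₀ Q : Finset (Finset α)} (hP₀ : P₀ ∈ ℱ)
    (hA : A ∈ P₀) (hmin : ∀ Q ∈ ℱ, ∀ R ∈ Q, R ⊆ A → R = A) (hQ : Q ∈ ℱ) (hQP₀ : Q ≠ P₀) :
    ∃ X ∈ P₀.erase A, ∃ P ∈ Q, Y \ P ⊆ X := by
  obtain ⟨A', hA', X, hX, hsub⟩ := hℱ.2 hQ hP₀ hQP₀
  refine ⟨X, Finset.mem_erase.2 ⟨?_, hX⟩, A', hA', hsub⟩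
  rintro rfl
  have hQ3 := hℱ.1 Q hQ
  obtain ⟨C₁, hC₁, hC₁A', -⟩ := hQ3.exists_ne_ne A' A'
  obtain ⟨C₂, hC₂, hC₂A', hC₂C₁⟩ := hQ3.exists_ne_ne A' C₁
  apply hC₂C₁
  rw [hmin Q hQ C₁ hC₁ (hQ3.subset_of_sdiff_subset hA' hsub hC₁ hC₁A'),
    hmin Q hQ C₂ hC₂ (hQ3.subset_of_sdiff_subset hA' hsub hC₂ hC₂A')]

/-- Contracting `Y \ B` to a point turns `ℱ` into a compatible family of the same size on a set
of `B.card + 1` points. -/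
lemma card_add_one_le_of_contract (hℱ : IsCompatibleFamily Y ℱ) (hYB : (Y \ B).Nonempty)
    (hBY : B ⊆ Y) (hB : B.Nonempty) (hbig : ∀ Q ∈ ℱ, ∃ P ∈ Q, Y \ P ⊆ B)
    (IH : ∀ (Y' : Finset α) 𝒢, IsCompatibleFamily Y' 𝒢 → 𝒢.Nonempty → 𝒢.card = ℱ.card →
      𝒢.card + 2 ≤ Y'.card) :
    ℱ.card + 1 ≤ B.card := by
  rcases ℱ.eq_empty_or_nonempty with rfl | hne
  · simpa using hB.card_pos
  obtain ⟨a₀, ha₀⟩ := hYB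
  obtain ⟨ha₀Y, ha₀B⟩ := Finset.mem_sdiff.1 ha₀
  obtain ⟨h𝒢, hcard⟩ := hℱ.image fun Q hQ =>
    let ⟨P, hP, hPB⟩ := hbig Q hQ
    (hℱ.1 Q hQ).isSaturated_contract hP hPB ha₀B
  have := IH _ _ h𝒢 (hne.image _) hcard
  rw [image_contract ha₀Y hBY, Finset.card_insert_of_notMem ha₀B] at this
  omega

/-- The Burton–Keane partition lemma, by induction on `ℱ.card`: a minimal part `A` of some
`P₀ ∈ ℱ` sends every other partition into a branch at one of the two other parts `X` of `P₀`, and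
each branch is handled by contracting `Y \ X`. -/
theorem card_add_two_le (hℱ : IsCompatibleFamily Y ℱ) (hne : ℱ.Nonempty) :
    ℱ.card + 2 ≤ Y.card := by
  induction hn : ℱ.card using Nat.strong_induction_on generalizing Y ℱ with
  | _ n IH =>
  obtain ⟨P₀, hP₀, A, hA, hmin⟩ := hℱ.exists_minimal_part hne
  have hP₀3 := hℱ.1 P₀ hP₀
  set branch : Finset α → Finset (Finset (Finset α)) :=
    fun X => (ℱ.erase P₀).filter fun Q => ∃ P ∈ Q, Y \ P ⊆ X
  have hbranch : ∀ X ∈ P₀.erase A, (branch X).card + 1 ≤ X.card := by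
    intro X hX
    have hX := Finset.mem_of_mem_erase hX
    have hsub : branch X ⊆ ℱ.erase P₀ := Finset.filter_subset _ _
    have hlt : (branch X).card < n := by
      have := Finset.card_le_card hsub
      rw [Finset.card_erase_of_mem hP₀] at this
      have := hne.card_pos
      omega
    exact (hℱ.mono (hsub.trans (Finset.erase_subset _ _))).card_add_one_le_of_contract
      (hP₀3.sdiff_nonempty hX) (hP₀3.subset X hX) (hP₀3.nonempty X hX)
      (fun Q hQ => (Finset.mem_filter.1 hQ).2) fun _ _ h𝒢 h𝒢ne hc => IH _ (hc ▸ hlt) h𝒢 h𝒢ne rfl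
  have hcover : ℱ ⊆ insert P₀ ((P₀.erase A).biUnion branch) := by
    intro Q hQ
    by_cases hQP₀ : Q = P₀
    · simp [hQP₀]
    obtain ⟨X, hX, hbr⟩ := hℱ.exists_branch hP₀ hA hmin hQ hQP₀
    exact Finset.mem_insert_of_mem (Finset.mem_biUnion.2
      ⟨X, hX, Finset.mem_filter.2 ⟨Finset.mem_erase.2 ⟨hQP₀, hQ⟩, hbr⟩⟩)
  have hY : Y.card = A.card + ∑ X ∈ P₀.erase A, X.card := by
    rw [Finset.add_sum_erase _ _ hA, hP₀3.card_eq_sum]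
  have hsum := Finset.sum_le_sum hbranch
  rw [Finset.sum_add_distrib, Finset.sum_const, Finset.card_erase_of_mem hA, hP₀3.card_eq,
    smul_eq_mul] at hsum
  have := (Finset.card_le_card hcover).trans
    ((Finset.card_insert_le _ _).trans (Nat.add_le_add_right Finset.card_biUnion_le 1))
  have := (hP₀3.nonempty A hA).card_pos
  omega

lemma card_le (hℱ : IsCompatibleFamily Y ℱ) : ℱ.card ≤ Y.card := by
  rcases ℱ.eq_empty_or_nonempty with rfl | hne
  · simp
  · have := hℱ.card_add_two_le hne
    omega

end IsCompatibleFamily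

def fiberPartition (Y : Finset α) (g : α → Fin 3) : Finset (Finset α) :=
  Finset.univ.image fun i => Y.filter (g · = i)

lemma isThreePartition_fiberPartition {g : α → Fin 3} (h : ∀ i, ∃ y ∈ Y, g y = i) :
    IsThreePartition Y (fiberPartition Y g) := by
  have hinj : Function.Injective fun i => Y.filter (g · = i) := by
    intro i j hij
    obtain ⟨y, hy, rfl⟩ := h i
    simpa [hy] using Finset.ext_iff.1 hij y
  refine ⟨by simp [fiberPartition, Finset.card_image_of_injective _ hinj], ?_, ?_, ?_, ?_⟩
  · simp only [fiberPartition, Finset.mem_image, Finset.mem_univ, true_and]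
    rintro _ ⟨i, rfl⟩
    obtain ⟨y, hy, hyi⟩ := h i
    exact ⟨y, by simp [hy, hyi]⟩
  · simp only [fiberPartition, Finset.mem_image, Finset.mem_univ, true_and]
    rintro _ ⟨i, rfl⟩
    exact Finset.filter_subset _ _
  · simp only [fiberPartition, Finset.mem_image, Finset.mem_univ, true_and]
    rintro _ ⟨i, rfl⟩ _ ⟨j, rfl⟩ hij
    exact Finset.disjoint_filter.2 fun y _ hi hj => hij (by rw [← hi, ← hj])
  · intro y hy
    exact ⟨Y.filter (g · = g y), by simp [fiberPartition], by simp [hy]⟩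

lemma compatible_fiberPartition {g g' : α → Fin 3} (x x' : α)
    (h : ∀ y ∈ Y, g y ≠ g x → g' y = g' x') :
    Compatible Y (fiberPartition Y g) (fiberPartition Y g') :=
  ⟨Y.filter (g · = g x), by simp [fiberPartition], Y.filter (g' · = g' x'),
    by simp [fiberPartition], fun y hy => by
      simp only [Finset.mem_sdiff, Finset.mem_filter, not_and] at hy ⊢
      exact ⟨hy.1, h y hy.1 (hy.2 hy.1)⟩⟩

end ThreePartitions

section Counting

variable {α ι : Type*} {r : α → α → Prop} {S : Set α} {F F' : Finset α} {e e' : Fin 3 → α}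

variable (r) in
def side (S : Set α) (F : Finset α) (e : Fin 3 → α) (y : α) : Fin 3 :=
  if y ∈ componentIn r (S \ ↑F) (e 0) then 0 else if y ∈ componentIn r (S \ ↑F) (e 1) then 1 else 2

lemma IsTrifurcation.apply_zero_mem (h : IsTrifurcation r S F e) : e 0 ∈ S :=
  (mem_of_componentIn_infinite (h.infinite 0)).1

lemma IsTrifurcation.side_apply (h : IsTrifurcation r S F e) (i : Fin 3) :
    side r S F e (e i) = i := by
  have h01 := h.separated (show (0 : Fin 3) ≠ 1 by decide)
  have h02 := h.separated (show (0 : Fin 3) ≠ 2 by decide)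
  have h12 := h.separated (show (1 : Fin 3) ≠ 2 by decide)
  fin_cases i <;> simp_all [side, mem_componentIn_self]

variable [Std.Symm r]

lemma side_eq_of_mem_componentIn {x y : α} (h : y ∈ componentIn r (S \ ↑F) x) :
    side r S F e y = side r S F e x := by
  simp only [side, mem_componentIn_iff_of_mem h]

namespace IsTrifurcation

lemma isThreePartition_fiberPartition (h : IsTrifurcation r S F e) {Z : Finset α}
    (hZ : ∀ i, ∃ y ∈ Z, y ∈ componentIn r (S \ ↑F) (e i)) :
    IsThreePartition Z (fiberPartition Z (side r S F e)) :=
  CP.isThreePartition_fiberPartition fun i =>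
    let ⟨y, hyZ, hy⟩ := hZ i
    ⟨y, hyZ, (side_eq_of_mem_componentIn hy).trans (h.side_apply i)⟩

lemma compatible_fiberPartition (h : IsTrifurcation r S F e) (h' : IsTrifurcation r S F' e')
    (hFF' : Disjoint F F') {Z : Finset α} (hZ : ∀ y ∈ Z, y ∈ componentIn r S (e 0) ∧ y ∉ F) :
    Compatible Z (fiberPartition Z (side r S F e)) (fiberPartition Z (side r S F' e')) := by
  obtain ⟨f, hf, -⟩ := h.isConnectedIn
  obtain ⟨g, hg, -⟩ := h'.isConnectedIn
  refine CP.compatible_fiberPartition g f fun y hy hside => ?_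
  obtain ⟨hyC, hyF⟩ := hZ y hy
  have hFS : ↑F ⊆ S := fun x hx => mem_of_mem_componentIn h.apply_zero_mem (h.core_subset hx)
  have hF'S : ↑F' ⊆ S := fun x hx => mem_of_mem_componentIn h'.apply_zero_mem (h'.core_subset hx)
  have hfy : f ∈ componentIn r S y := componentIn_eq_of_mem hyC ▸ h.core_subset hf
  exact side_eq_of_mem_componentIn (mem_componentIn_diff_of_not_mem h.isConnectedIn
    h'.isConnectedIn (by exact_mod_cast hFF') hFS hF'S hf hg
    ⟨mem_of_mem_componentIn h.apply_zero_mem hyC, hyF⟩ hfy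
    fun hyg => hside (side_eq_of_mem_componentIn hyg))

end IsTrifurcation

/-- The trifurcations induce distinct, pairwise compatible three-partitions of the points of `Y`
in `C`. -/
lemma card_le_of_isTrifurcation_of_cluster {Y : Finset α} {Q : Finset ι} {F : ι → Finset α}
    {e : ι → Fin 3 → α} {C : Set α} (htrif : ∀ q ∈ Q, IsTrifurcation r S (F q) (e q))
    (hC : ∀ q ∈ Q, componentIn r S (e q 0) = C)
    (hcores : (Q : Set ι).Pairwise fun q q' => Disjoint (F q) (F q'))
    (hYF : ∀ q ∈ Q, Disjoint Y (F q))
    (hY : ∀ q ∈ Q, ∀ i, ∃ y ∈ Y, y ∈ componentIn r (S \ ↑(F q)) (e q i)) :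
    Q.card ≤ (Y.filter fun y => componentIn r S y = C).card := by
  set Z := Y.filter fun y => componentIn r S y = C
  set part : ι → Finset (Finset α) := fun q => fiberPartition Z (side r S (F q) (e q))
  have hZ : ∀ q ∈ Q, ∀ y ∈ Z, y ∈ componentIn r S (e q 0) ∧ y ∉ F q := fun q hq y hy => by
    obtain ⟨hyY, hyC⟩ := Finset.mem_filter.1 hy
    exact ⟨mem_componentIn_iff_componentIn_eq.2 (hyC.trans (hC q hq).symm),
      Finset.disjoint_left.1 (hYF q hq) hyY⟩
  have h3 : ∀ q ∈ Q, IsThreePartition Z (part q) := fun q hq =>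
    (htrif q hq).isThreePartition_fiberPartition fun i => by
      obtain ⟨y, hyY, hy⟩ := hY q hq i
      refine ⟨y, Finset.mem_filter.2 ⟨hyY, (hC q hq) ▸ componentIn_eq_of_mem ?_⟩, hy⟩
      exact componentIn_trans ((htrif q hq).mem_componentIn i)
        (componentIn_mono Set.sdiff_subset hy)
  have hcompat : (Q : Set ι).Pairwise fun q q' => Compatible Z (part q) (part q') :=
    fun q hq q' hq' hne => (htrif q hq).compatible_fiberPartition (htrif q' hq')
      (hcores hq hq' hne) (hZ q hq)
  have hinj : Set.InjOn part Q := fun q hq q' hq' heq => by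
    by_contra hne
    obtain ⟨A, hA, B, hB, hAB⟩ := hcompat hq hq' hne
    exact (h3 q' hq').not_sdiff_subset (heq ▸ hA) hB hAB
  rw [← Finset.card_image_of_injOn hinj]
  refine IsCompatibleFamily.card_le ⟨?_, ?_⟩
  · simp only [Finset.mem_image]
    rintro _ ⟨q, hq, rfl⟩
    exact h3 q hq
  · rw [Finset.coe_image, hinj.pairwise_image]
    exact hcompat

theorem card_le_of_isTrifurcation {Y : Finset α} {Q : Finset ι} {F : ι → Finset α}
    {e : ι → Fin 3 → α} (htrif : ∀ q ∈ Q, IsTrifurcation r S (F q) (e q))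
    (hcores : (Q : Set ι).Pairwise fun q q' => Disjoint (F q) (F q'))
    (hYF : ∀ q ∈ Q, Disjoint Y (F q))
    (hY : ∀ q ∈ Q, ∀ i, ∃ y ∈ Y, y ∈ componentIn r (S \ ↑(F q)) (e q i)) :
    Q.card ≤ Y.card := by
  set cluster : ι → Set α := fun q => componentIn r S (e q 0)
  calc Q.card = ∑ C ∈ Q.image cluster, (Q.filter (cluster · = C)).card :=
        Finset.card_eq_sum_card_image _ _
    _ ≤ ∑ C ∈ Q.image cluster, (Y.filter fun y => componentIn r S y = C).card := by
        refine Finset.sum_le_sum fun C _ => ?_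
        have hsub : Q.filter (cluster · = C) ⊆ Q := Finset.filter_subset _ _
        exact card_le_of_isTrifurcation_of_cluster (fun q hq => htrif q (hsub hq))
          (fun q hq => (Finset.mem_filter.1 hq).2) (hcores.mono (Finset.coe_subset.2 hsub))
          (fun q hq => hYF q (hsub hq)) fun q hq => hY q (hsub hq)
    _ ≤ Y.card := by
        rw [Finset.sum_card_fiberwise_eq_card_filter]
        exact Finset.card_filter_le _ _

end Counting

section Transport

variable {α : Type*} {r : α → α → Prop} {S : Set α} {F : Finset α} {e : Fin 3 → α}

lemma image_componentIn_subset (g : r ≃r r) (S : Set α) (x : α) :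
    g '' componentIn r S x ⊆ componentIn r (g '' S) (g x) := by
  rintro _ ⟨y, hy, rfl⟩
  exact ReflTransGen.lift g (fun a b ⟨ha, hb, hab⟩ =>
    ⟨Set.mem_image_of_mem g ha, Set.mem_image_of_mem g hb, g.map_rel_iff.2 hab⟩) _ _ hy

lemma image_componentIn (g : r ≃r r) (S : Set α) (x : α) :
    g '' componentIn r S x = componentIn r (g '' S) (g x) := by
  refine (image_componentIn_subset g S x).antisymm fun y hy => ?_
  have := image_componentIn_subset g.symm _ _ (Set.mem_image_of_mem g.symm hy)
  rw [RelIso.symm_apply_apply, ← Set.image_comp] at this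
  simp only [Function.comp_def, RelIso.symm_apply_apply, Set.image_id'] at this
  exact ⟨_, this, g.apply_symm_apply y⟩

lemma IsTrifurcation.image (g : r ≃r r) (h : IsTrifurcation r S F e) :
    IsTrifurcation r (g '' S) (F.map g.toEmbedding) (g ∘ e) := by
  have hcoe : (↑(F.map g.toEmbedding) : Set α) = g '' ↑F := Finset.coe_map _ _
  have hdiff : g '' S \ ↑(F.map g.toEmbedding) = g '' (S \ ↑F) := by
    rw [hcoe, Set.image_sdiff g.injective]
  obtain ⟨ρ, hρ, hF⟩ := h.isConnectedIn
  refine ⟨⟨g ρ, hcoe ▸ Set.mem_image_of_mem g hρ, ?_⟩, ?_, fun i => ?_, fun i => ?_, ?_⟩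
  · rw [hcoe]
    rintro _ ⟨a, ha, rfl⟩
    exact image_componentIn_subset g _ ρ (Set.mem_image_of_mem g (hF a ha))
  · rw [hcoe]
    exact (Set.image_mono h.core_subset).trans (image_componentIn_subset g S _)
  · exact image_componentIn_subset g S _ (Set.mem_image_of_mem g (h.mem_componentIn i))
  · rw [hdiff, Function.comp_apply, ← image_componentIn]
    exact (h.infinite i).image g.injective.injOn
  · intro i j hij hji
    rw [hdiff, Function.comp_apply, Function.comp_apply, ← image_componentIn,
      g.injective.mem_set_image] at hji
    exact h.separated hij hji

lemma isTrifurcation_image_iff (g : r ≃r r) :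
    IsTrifurcation r (g '' S) (F.map g.toEmbedding) (g ∘ e) ↔ IsTrifurcation r S F e := by
  refine ⟨fun h => ?_, IsTrifurcation.image g⟩
  convert h.image g.symm using 1
  · simp [Set.image_image]
  · rw [Finset.map_map]
    ext x
    simp
  · ext i
    simp

end Transport

section Measurability

variable {Ω α : Type*} [MeasurableSpace Ω]

lemma measurable_isChain {R : Ω → α → α → Prop} (hR : ∀ a b, Measurable fun ω => R ω a b) :
    ∀ l : List α, Measurable fun ω => List.IsChain (R ω) l
  | [] => by simp [measurable_const]
  | [_] => by simp [measurable_const]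
  | a :: b :: l => by
    simp only [List.isChain_cons_cons]
    exact (hR a b).and (measurable_isChain hR (b :: l))

variable [Countable α]

lemma measurable_reflTransGen {R : Ω → α → α → Prop} (hR : ∀ a b, Measurable fun ω => R ω a b)
    (x y : α) : Measurable fun ω => ReflTransGen (R ω) x y := by
  have : (fun ω => ReflTransGen (R ω) x y) = fun ω => ∃ l : List α,
      List.IsChain (R ω) (x :: l) ∧ (x :: l).getLast (List.cons_ne_nil _ _) = y := by
    funext ω
    exact propext ⟨List.exists_isChain_cons_of_relationReflTransGen,
      fun ⟨l, h₁, h₂⟩ => List.relationReflTransGen_of_exists_isChain_cons l h₁ h₂⟩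
  rw [this]
  exact Measurable.exists fun l => (measurable_isChain hR _).and measurable_const

lemma measurable_infinite {A : Ω → Set α} (hA : ∀ a, Measurable fun ω => a ∈ A ω) :
    Measurable fun ω => (A ω).Infinite := by
  have : (fun ω => (A ω).Infinite) = fun ω => ∀ G : Finset α, ∃ a, a ∈ A ω ∧ a ∉ G := by
    funext ω
    refine propext ⟨fun h G => h.exists_notMem_finset G, fun h hfin => ?_⟩
    obtain ⟨a, ha, haG⟩ := h hfin.toFinset
    exact haG (hfin.mem_toFinset.2 ha)
  rw [this]
  exact Measurable.forall fun G => Measurable.exists fun a => (hA a).and measurable_const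

lemma measurable_mem_componentIn {S : Ω → Set α} (hS : ∀ a, Measurable fun ω => a ∈ S ω)
    (r : α → α → Prop) (x e : α) :
    Measurable fun ω => x ∈ componentIn r (S ω) e :=
  measurable_reflTransGen (fun a b => (hS a).and ((hS b).and measurable_const)) e x

lemma measurable_isTrifurcation {S : Ω → Set α} (hS : ∀ a, Measurable fun ω => a ∈ S ω)
    (r : α → α → Prop) (F : Finset α) (e : Fin 3 → α) :
    Measurable fun ω => IsTrifurcation r (S ω) F e := by
  have hSF : ∀ a, Measurable fun ω => a ∈ S ω \ ↑F := fun a => (hS a).and measurable_const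
  have : (fun ω => IsTrifurcation r (S ω) F e) = fun ω => IsConnectedIn r ↑F ∧
      (∀ x, x ∈ F → x ∈ componentIn r (S ω) (e 0)) ∧ (∀ i, e i ∈ componentIn r (S ω) (e 0)) ∧
      (∀ i, (componentIn r (S ω \ ↑F) (e i)).Infinite) ∧
      ∀ i j, i ≠ j → e j ∉ componentIn r (S ω \ ↑F) (e i) := by
    funext ω
    exact propext ⟨fun h => ⟨h.1, h.2, h.3, h.4, h.5⟩,
      fun h => ⟨h.1, h.2.1, h.2.2.1, h.2.2.2.1, h.2.2.2.2⟩⟩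
  have hcore : Measurable fun ω => ∀ x, x ∈ F → x ∈ componentIn r (S ω) (e 0) :=
    Measurable.forall fun _ => measurable_const.imp (measurable_mem_componentIn hS r _ _)
  have hmem : Measurable fun ω => ∀ i, e i ∈ componentIn r (S ω) (e 0) :=
    Measurable.forall fun _ => measurable_mem_componentIn hS r _ _
  have hinf : Measurable fun ω => ∀ i, (componentIn r (S ω \ ↑F) (e i)).Infinite :=
    Measurable.forall fun _ => measurable_infinite (measurable_mem_componentIn hSF r · _)
  have hsep : Measurable fun ω => ∀ i j, i ≠ j → e j ∉ componentIn r (S ω \ ↑F) (e i) :=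
    Measurable.forall fun _ => Measurable.forall fun _ =>
      measurable_const.imp (measurable_mem_componentIn hSF r _ _).not
  rw [this]
  exact measurable_const.and (hcore.and (hmem.and (hinf.and hsep)))

end Measurability

section Contours

instance : Std.Symm shareEnd := ⟨fun _ _ h => by unfold shareEnd at *; tauto⟩

lemma abs_sub_le_two_of_shareEnd {a b : BEdge} (h : shareEnd a b) :
    |b.1.1 - a.1.1| ≤ 2 ∧ |b.1.2 - a.1.2| ≤ 2 := by
  obtain ⟨⟨ax, ay⟩, da⟩ := a
  obtain ⟨⟨bx, by'⟩, db⟩ := b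
  simp only [abs_le]
  cases da <;> cases db <;> simp [shareEnd, edgeEnds] at h <;> omega

lemma finite_setOf_shareEnd (a : BEdge) : {b | shareEnd a b}.Finite := by
  refine ((Set.finite_Icc (a.1 - (2, 2)) (a.1 + (2, 2))).prod Set.finite_univ).subset fun b hb => ?_
  have := abs_sub_le_two_of_shareEnd hb
  simp only [abs_le] at this
  simp only [Set.mem_prod, Set.mem_Icc, Set.mem_univ, and_true, Prod.le_def, Prod.fst_sub,
    Prod.snd_sub, Prod.fst_add, Prod.snd_add]
  omega

def presentEdges (ω : Config) : Set BEdge := {e | contourCfg ω e = true}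

lemma exists_isTrifurcation_of_not_atMostTwoEnds {ω : Config} {C : Set BEdge}
    (hC : IsContour ω C) (h : ¬AtMostTwoEnds C) :
    ∃ F e, IsTrifurcation shareEnd (presentEdges ω) F e := by
  obtain ⟨e₀, he₀, rfl⟩ := hC
  simp only [AtMostTwoEnds, not_forall, not_or] at h
  obtain ⟨F₀, hF₀, e₁, e₂, e₃, h₁, h₂, h₃, hi₁, hi₂, hi₃, h₁₂, h₁₃, h₂₃⟩ := h
  refine exists_isTrifurcation finite_setOf_shareEnd he₀ hF₀ (e := ![e₁, e₂, e₃]) ?_ ?_ ?_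
  · intro i
    fin_cases i
    exacts [h₁.1, h₂.1, h₃.1]
  · intro i
    fin_cases i
    exacts [hi₁, hi₂, hi₃]
  · intro i j hij
    fin_cases i <;> fin_cases j
    all_goals first
      | exact absurd rfl hij
      | exact h₁₂ | exact h₁₃ | exact h₂₃
      | exact Ne.symm h₁₂ | exact Ne.symm h₁₃ | exact Ne.symm h₂₃

def translateEdge (t : ℤ × ℤ) : shareEnd ≃r shareEnd where
  toEquiv := (Equiv.addRight t).prodCongr (Equiv.refl Bool)
  map_rel_iff' := by
    rintro ⟨⟨ax, ay⟩, da⟩ ⟨⟨bx, by'⟩, db⟩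
    cases da <;> cases db <;> simp [shareEnd, edgeEnds] <;> omega

@[simp]
lemma translateEdge_apply (t : ℤ × ℤ) (e : BEdge) : translateEdge t e = (e.1 + t, e.2) := rfl

lemma contourCfg_shift {t : ℤ × ℤ} (ht : Even (t.1 + t.2)) (ω : Config) (e : BEdge) :
    contourCfg (shift t ω) (translateEdge t e) = contourCfg ω e := by
  obtain ⟨⟨x, y⟩, d⟩ := e
  obtain ⟨t₁, t₂⟩ := t
  have hblack : IsBlackFace (x + t₁, y + t₂) ↔ IsBlackFace (x, y) := by
    simp only [IsBlackFace, show x + t₁ + (y + t₂) = x + y + (t₁ + t₂) by ring, Int.even_add,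
      ht, iff_true]
  simp only [contourCfg, translateEdge_apply, Prod.mk_add_mk, hblack]
  cases d <;> simp [shift, add_right_comm _ t₁ 1, add_right_comm _ t₂ 1]

lemma presentEdges_shift {t : ℤ × ℤ} (ht : Even (t.1 + t.2)) (ω : Config) :
    presentEdges (shift t ω) = translateEdge t '' presentEdges ω := by
  ext e
  refine ⟨fun he => ⟨(translateEdge t).symm e, ?_, RelIso.apply_symm_apply _ _⟩, ?_⟩
  · rwa [presentEdges, Set.mem_ofPred_eq, ← contourCfg_shift ht, RelIso.apply_symm_apply]
  · rintro ⟨x, hx, rfl⟩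
    exact (contourCfg_shift ht ω x).trans hx

lemma measurable_contourCfg (e : BEdge) : Measurable fun ω : Config => contourCfg ω e := by
  have hbne (p q : ℤ × ℤ) : Measurable fun ω : Config => ω p != ω q :=
    show Measurable ((fun b : Bool × Bool => b.1 != b.2) ∘ fun ω : Config => (ω p, ω q)) from
      (measurable_of_countable _).comp ((measurable_pi_apply p).prodMk (measurable_pi_apply q))
  unfold contourCfg
  split_ifs
  exacts [hbne _ _, hbne _ _, measurable_const]

def trifurcationEvent (F : Finset BEdge) (e : Fin 3 → BEdge) : Set Config :=
  {ω | IsTrifurcation shareEnd (presentEdges ω) F e}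

lemma measurableSet_trifurcationEvent (F : Finset BEdge) (e : Fin 3 → BEdge) :
    MeasurableSet (trifurcationEvent F e) :=
  measurableSet_setOfPred.2 <| measurable_isTrifurcation
    (fun a => measurableSet_setOfPred.1 (measurable_contourCfg a (measurableSet_singleton true)))
    shareEnd F e

lemma shift_preimage_trifurcationEvent {t : ℤ × ℤ} (ht : Even (t.1 + t.2)) (F : Finset BEdge)
    (e : Fin 3 → BEdge) :
    shift t ⁻¹' trifurcationEvent (F.map (translateEdge t).toEmbedding) (translateEdge t ∘ e) =
      trifurcationEvent F e := by
  ext ω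
  simp only [trifurcationEvent, Set.mem_preimage, Set.mem_ofPred_eq, presentEdges_shift ht,
    isTrifurcation_image_iff]

end Contours

section Boxes

def box (M : ℕ) : Finset BEdge := Finset.Icc (-(M : ℤ), -(M : ℤ)) ((M : ℤ), (M : ℤ)) ×ˢ Finset.univ

def annulus (M : ℕ) : Finset BEdge := box (M + 2) \ box M

lemma mem_box {M : ℕ} {e : BEdge} : e ∈ box M ↔ |e.1.1| ≤ M ∧ |e.1.2| ≤ M := by
  simp only [box, Finset.mem_product, Finset.mem_Icc, Finset.mem_univ, and_true, Prod.le_def,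
    abs_le]
  omega

lemma card_box (M : ℕ) : (box M).card = 2 * (2 * M + 1) ^ 2 := by
  simp only [box, Finset.card_product, Finset.Icc_prod_def, Int.card_Icc, Finset.card_univ,
    Fintype.card_bool]
  rw [show (M + 1 - -(M : ℤ)).toNat = 2 * M + 1 by omega]
  ring

lemma box_mono {M M' : ℕ} (h : M ≤ M') : box M ⊆ box M' := fun e he => by
  rw [mem_box] at he ⊢
  omega

lemma card_annulus (M : ℕ) : (annulus M).card = 32 * M + 48 := by
  rw [annulus, Finset.card_sdiff_of_subset (box_mono (by omega)), card_box, card_box]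
  refine Nat.sub_eq_of_eq_add ?_
  ring

lemma mem_box_of_shareEnd {M : ℕ} {a b : BEdge} (h : shareEnd a b) (ha : a ∈ box M) :
    b ∈ box (M + 2) := by
  have := abs_sub_le_two_of_shareEnd h
  rw [mem_box] at ha ⊢
  simp only [abs_le] at this ha ⊢
  omega

lemma translateEdge_mem_box {N K : ℕ} {t : ℤ × ℤ} (ht : |t.1| ≤ K ∧ |t.2| ≤ K) {e : BEdge}
    (he : e ∈ box N) : translateEdge t e ∈ box (N + K) := by
  rw [mem_box] at he ⊢
  simp only [abs_le, translateEdge_apply, Prod.fst_add, Prod.snd_add] at ht he ⊢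
  omega

lemma exists_subset_box (s : Finset BEdge) : ∃ N, s ⊆ box N := by
  refine ⟨s.sup fun e => (|e.1.1| + |e.1.2|).toNat, fun e he => mem_box.2 ?_⟩
  have := Finset.le_sup (f := fun e : BEdge => (|e.1.1| + |e.1.2|).toNat) he
  have := abs_nonneg e.1.1
  have := abs_nonneg e.1.2
  omega

end Boxes

section Translates

lemma eq_of_add_mul_eq_add_mul {N c a a' u u' : ℤ} (ha : |a| ≤ N) (ha' : |a'| ≤ N)
    (hc : 2 * N < c) (h : a + c * u = a' + c * u') : u = u' := by
  rw [abs_le] at ha ha'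
  rcases lt_trichotomy u u' with hlt | heq | hgt
  · nlinarith
  · exact heq
  · nlinarith

/-- Written exactly as the translations in `SatisfiesAk1`, so that (Ak1) applies verbatim. -/
def gridVec (k P : ℕ) (t : ℕ × ℕ) : ℤ × ℤ :=
  (2 * (k : ℤ) * ((P : ℤ) * t.1), 2 * (k : ℤ) * ((P : ℤ) * t.2))

lemma even_gridVec (k P : ℕ) (t : ℕ × ℕ) : Even ((gridVec k P t).1 + (gridVec k P t).2) :=
  ⟨k * (P * t.1) + k * (P * t.2), by simp only [gridVec]; ring⟩

lemma abs_gridVec_le {k P n : ℕ} {t : ℕ × ℕ} (ht : t ∈ Finset.range n ×ˢ Finset.range n) :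
    |(gridVec k P t).1| ≤ (2 * k * P * n : ℕ) ∧ |(gridVec k P t).2| ≤ (2 * k * P * n : ℕ) := by
  have key {m : ℕ} (hm : m < n) : |2 * (k : ℤ) * (P * m)| ≤ (2 * k * P * n : ℕ) := by
    rw [show 2 * (k : ℤ) * (P * m) = ((2 * k * P * m : ℕ) : ℤ) by push_cast; ring, Nat.abs_cast]
    exact_mod_cast Nat.mul_le_mul_left _ hm.le
  simp only [Finset.mem_product, Finset.mem_range] at ht
  exact ⟨key ht.1, key ht.2⟩

def gridEvent (k P : ℕ) (F : Finset BEdge) (e : Fin 3 → BEdge) (t : ℕ × ℕ) : Set Config :=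
  trifurcationEvent (F.map (translateEdge (gridVec k P t)).toEmbedding)
    (translateEdge (gridVec k P t) ∘ e)

lemma disjoint_map_translateEdge {k P N : ℕ} (hNP : N < k * P) {F : Finset BEdge}
    (hF : F ⊆ box N) {t t' : ℕ × ℕ} (htt' : t ≠ t') :
    Disjoint (F.map (translateEdge (gridVec k P t)).toEmbedding)
      (F.map (translateEdge (gridVec k P t')).toEmbedding) := by
  refine Finset.disjoint_left.2 fun x hx hx' => htt' ?_
  obtain ⟨f, hf, rfl⟩ := Finset.mem_map.1 hx
  obtain ⟨f', hf', hff'⟩ := Finset.mem_map.1 hx'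
  have hf := mem_box.1 (hF hf)
  have hf' := mem_box.1 (hF hf')
  simp only [RelIso.coe_toEmbedding, translateEdge_apply, gridVec, Prod.ext_iff, Prod.fst_add,
    Prod.snd_add] at hff'
  have hc : 2 * (N : ℤ) < 2 * k * P := by
    have : (N : ℤ) < k * P := by exact_mod_cast hNP
    linarith
  have h₁ := eq_of_add_mul_eq_add_mul (u := t'.1) (u' := t.1) hf'.1 hf.1 hc
    (by linear_combination hff'.1.1)
  have h₂ := eq_of_add_mul_eq_add_mul (u := t'.2) (u' := t.2) hf'.2 hf.2 hc
    (by linear_combination hff'.1.2)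
  exact Prod.ext (by exact_mod_cast h₁.symm) (by exact_mod_cast h₂.symm)

lemma card_filter_mem_gridEvent_le {k P N : ℕ} (hNP : N < k * P) {F : Finset BEdge}
    {e : Fin 3 → BEdge} (hF : F ⊆ box N) (he : ∀ i, e i ∈ box N) (n : ℕ) (ω : Config) :
    ((Finset.range n ×ˢ Finset.range n).filter (ω ∈ gridEvent k P F e ·)).card ≤
      32 * (N + 2 * k * P * n) + 48 := by
  set M := N + 2 * k * P * n
  have hbox : ∀ t ∈ Finset.range n ×ˢ Finset.range n, ∀ f ∈ box N,
      translateEdge (gridVec k P t) f ∈ box M := fun t ht f hf =>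
    translateEdge_mem_box (abs_gridVec_le ht) hf
  rw [← card_annulus M]
  refine card_le_of_isTrifurcation (r := shareEnd) (S := presentEdges ω)
    (fun t ht => (Finset.mem_filter.1 ht).2)
    (fun t _ t' _ htt' => disjoint_map_translateEdge hNP hF htt') (fun t ht => ?_) fun t ht i => ?_
  · refine Finset.disjoint_left.2 fun y hy hyF => (Finset.mem_sdiff.1 hy).2 ?_
    obtain ⟨f, hf, rfl⟩ := Finset.mem_map.1 hyF
    exact hbox t (Finset.mem_filter.1 ht).1 f (hF hf)
  · obtain ⟨y, hy, hyM⟩ := exists_mem_sdiff_of_componentIn_infinite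
      (fun a b hab ha => mem_box_of_shareEnd hab ha) (hbox t (Finset.mem_filter.1 ht).1 _ (he i))
      ((Finset.mem_filter.1 ht).2.infinite i)
    exact ⟨y, hyM, hy⟩

end Translates

section Probability

variable {Ω ι : Type*} [MeasurableSpace Ω]

lemma sum_measure_le_of_forall_card_le (μ : Measure Ω) (s : Finset ι) {E : ι → Set Ω}
    (hE : ∀ i, MeasurableSet (E i)) {m : ℕ} (h : ∀ ω, (s.filter (ω ∈ E ·)).card ≤ m) :
    ∑ i ∈ s, μ (E i) ≤ m * μ Set.univ := by
  calc ∑ i ∈ s, μ (E i) = ∫⁻ ω, ∑ i ∈ s, (E i).indicator 1 ω ∂μ := by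
        rw [lintegral_finsetSum _ fun i _ => measurable_one.indicator (hE i)]
        simp only [lintegral_indicator_one (hE _)]
    _ ≤ ∫⁻ _, (m : ℝ≥0∞) ∂μ := lintegral_mono fun ω => by
        simp only [Set.indicator_apply, Pi.one_apply, Finset.sum_boole]
        exact_mod_cast h ω
    _ = m * μ Set.univ := lintegral_const _

lemma eq_zero_of_forall_sq_mul_le {δ : ℝ≥0∞} {a b : ℕ}
    (h : ∀ n : ℕ, (n : ℝ≥0∞) ^ 2 * δ ≤ a * n + b) : δ = 0 := by
  by_contra hδ
  have hlin : ∀ n : ℕ, 0 < n → (n : ℝ≥0∞) * δ ≤ (a + b : ℕ) := fun n hn => by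
    rw [← ENNReal.mul_le_mul_iff_right (by exact_mod_cast hn.ne') (ENNReal.natCast_ne_top n)]
    calc (n : ℝ≥0∞) * (n * δ) = n ^ 2 * δ := by ring
      _ ≤ a * n + b := h n
      _ ≤ n * (a + b : ℕ) := by exact_mod_cast (show a * n + b ≤ n * (a + b) by nlinarith)
  have hδtop : δ ≠ ⊤ := ne_top_of_le_ne_top (ENNReal.natCast_ne_top (a + b))
    (by simpa using hlin 1 one_pos)
  obtain ⟨n, hn⟩ :=
    ENNReal.exists_nat_gt (ENNReal.div_lt_top (ENNReal.natCast_ne_top (a + b)) hδ).ne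
  have hn0 : 0 < n := by
    rcases n.eq_zero_or_pos with rfl | hn0
    · simp at hn
    · exact hn0
  exact (hlin n hn0).not_gt (mul_comm δ n ▸ (ENNReal.div_lt_iff (.inl hδ) (.inl hδtop)).1 hn)

end Probability

lemma measurable_shift (t : ℤ × ℤ) : Measurable (shift t) :=
  measurable_pi_lambda _ fun _ => measurable_pi_apply _

lemma measure_gridEvent {k : ℕ} {μ : Measure Config} (hAk1 : SatisfiesAk1 k μ) (P : ℕ)
    (F : Finset BEdge) (e : Fin 3 → BEdge) (t : ℕ × ℕ) :
    μ (gridEvent k P F e t) = μ (trifurcationEvent F e) := by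
  have hmap : Measure.map (shift (gridVec k P t)) μ = μ := hAk1 ((P : ℤ) * t.1, (P : ℤ) * t.2)
  have := Measure.map_apply (μ := μ) (measurable_shift (gridVec k P t))
    (measurableSet_trifurcationEvent (F.map (translateEdge (gridVec k P t)).toEmbedding)
      (translateEdge (gridVec k P t) ∘ e))
  rwa [hmap, shift_preimage_trifurcationEvent (even_gridVec k P t)] at this

lemma measure_trifurcationEvent_eq_zero {k : ℕ} (hk : 0 < k) {μ : Measure Config}
    [IsProbabilityMeasure μ] (hAk1 : SatisfiesAk1 k μ) (F : Finset BEdge) (e : Fin 3 → BEdge) :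
    μ (trifurcationEvent F e) = 0 := by
  obtain ⟨N, hN⟩ := exists_subset_box (F ∪ Finset.univ.image e)
  have hNP : N < k * (N + 1) := by nlinarith
  refine eq_zero_of_forall_sq_mul_le (a := 64 * k * (N + 1)) (b := 32 * N + 48) fun n => ?_
  calc (n : ℝ≥0∞) ^ 2 * μ (trifurcationEvent F e)
      = ∑ t ∈ Finset.range n ×ˢ Finset.range n, μ (gridEvent k (N + 1) F e t) := by
        simp [measure_gridEvent hAk1, Finset.card_product, sq]
    _ ≤ (32 * (N + 2 * k * (N + 1) * n) + 48 : ℕ) * μ Set.univ :=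
        sum_measure_le_of_forall_card_le μ _ (fun t => measurableSet_trifurcationEvent _ _)
          (card_filter_mem_gridEvent_le hNP (Finset.union_subset_left hN)
            (fun i => hN (by simp)) n)
    _ = (64 * k * (N + 1) : ℕ) * n + (32 * N + 48 : ℕ) := by
        rw [measure_univ, mul_one]
        push_cast
        ring

theorem no_contour_with_more_than_two_ends_general
    (k : ℕ) (hk : 0 < k) (μ : Measure Config) [IsProbabilityMeasure μ]
    (hAk1 : SatisfiesAk1 k μ) :
    μ {ω | ∃ C, IsContour ω C ∧ ¬AtMostTwoEnds C} = 0 := by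
  refine measure_mono_null (t := ⋃ p : Finset BEdge × (Fin 3 → BEdge), trifurcationEvent p.1 p.2)
    ?_ (measure_iUnion_null fun p => measure_trifurcationEvent_eq_zero hk hAk1 p.1 p.2)
  rintro ω ⟨C, hC, hends⟩
  obtain ⟨F, e, h⟩ := exists_isTrifurcation_of_not_atMostTwoEnds hC hends
  exact Set.mem_iUnion.2 ⟨(F, e), h⟩

/-- Lemma 3.1 of the paper: under (Ak1), almost surely no contour has
more than two ends. -/
theorem no_contour_with_more_than_two_ends
    (k : ℕ) (hk : 0 < k) (μ : Measure Config) [IsProbabilityMeasure μ]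
    (hΩ : μ {ω | Constrained ω} = 1)
    (hAk1 : SatisfiesAk1 k μ) :
    μ {ω | ∃ C, IsContour ω C ∧ ¬AtMostTwoEnds C} = 0 :=
  no_contour_with_more_than_two_ends_general k hk μ hAk1

end CP

end
end
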